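/- arXiv:2312.06148 — 3 statements merged into one kernel-verified Lean document; each statement's English description precedes it below -/
import Mathlib

section
/- (Theorem: good matching enumerator of the abstract band graph of a two-sided closed curve via a trace of matrix products.) For every integer d ≥ 1, every shape word f, every sign function ε, all nonzero edge weights as in the context, and all y_{i_1},…,y_{i_d} ∈ K: ∑_P x(P)·y(P) = x_a · (x_{i_1}·x_{i_2}⋯x_{i_d}) · tr(F · M_d), where the sum ranges over all perfect matchings P of the abstract snake graph 𝒢 that contain at least one of the two a-edges (equivalently, over all good matchings of the associated band graph, with the identified a-edge weighted x_a and counted once), and where F = !![x_{i_1}/x_{i_d}, x_a·y_{i_d}; 0, x_{i_d}·y_{i_d}/x_{i_1}] if ε_d = +1, and F = !![x_{i_1}·y_{i_d}/x_{i_d}, x_a; 0, x_{i_d}/x_{i_1}] if ε_d = −1. -/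
/-!
Statement 2: good matching enumerator of the abstract band graph of a two-sided
closed curve via a trace of matrix products (Theorem `goodmatchingenum`).
-/

open Matrix Finset
open scoped Classical

namespace SnakeGraph

/-- A potential edge of the snake graph: its lower-left endpoint together with a flag,
`true` meaning horizontal (from `v` to `v + (1,0)`), `false` vertical (from `v` to `v + (0,1)`). -/
abbrev Edge := (ℤ × ℤ) × Bool

/-- The second endpoint of an edge. -/
def ept (e : Edge) : ℤ × ℤ := e.1 + (if e.2 then ((1 : ℤ), (0 : ℤ)) else (0, 1))

/-- `e` covers the vertex `v`. -/
def covers (e : Edge) (v : ℤ × ℤ) : Prop := v = e.1 ∨ v = ept e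

/-- Positions of the tiles: `pos f 1 = (0,0)` and `pos f (j+1) = pos f j + (0,1)` or
`pos f j + (1,0)` according to whether `f j` is `true` (north) or `false` (east). -/
def pos (f : ℕ → Bool) : ℕ → ℤ × ℤ
  | 0 => (0, 0)
  | 1 => (0, 0)
  | j + 2 => pos f (j + 1) + (if f (j + 1) then ((0 : ℤ), (1 : ℤ)) else (1, 0))

/-- South edge of tile `j`. -/
def S (f : ℕ → Bool) (j : ℕ) : Edge := (pos f j, true)

/-- North edge of tile `j`. -/
def N (f : ℕ → Bool) (j : ℕ) : Edge := (pos f j + (0, 1), true)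

/-- West edge of tile `j`. -/
def W (f : ℕ → Bool) (j : ℕ) : Edge := (pos f j, false)

/-- East edge of tile `j`. -/
def Ed (f : ℕ → Bool) (j : ℕ) : Edge := (pos f j + (1, 0), false)

/-- All edges of the abstract snake graph with `d` tiles. -/
def edges (d : ℕ) (f : ℕ → Bool) : Finset Edge :=
  (Finset.Icc 1 d).biUnion fun j => {S f j, N f j, W f j, Ed f j}

/-- All vertices (tile corners) of the abstract snake graph with `d` tiles. -/
def verts (d : ℕ) (f : ℕ → Bool) : Finset (ℤ × ℤ) :=
  (Finset.Icc 1 d).biUnion fun j =>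
    {pos f j, pos f j + (1, 0), pos f j + (0, 1), pos f j + (1, 1)}

/-- A perfect matching of the snake graph: a set of edges covering each vertex exactly once. -/
def IsPerfectMatching (d : ℕ) (f : ℕ → Bool) (P : Finset Edge) : Prop :=
  P ⊆ edges d f ∧ ∀ v ∈ verts d f, ∃! e, e ∈ P ∧ covers e v

/-- The `Finset` of all perfect matchings of the snake graph. -/
noncomputable def matchings (d : ℕ) (f : ℕ → Bool) : Finset (Finset Edge) :=
  (edges d f).powerset.filter fun P => IsPerfectMatching d f P

/-- The step from `u` to `v` traverses the diagonal of tile `j`. -/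
def DiagStep (f : ℕ → Bool) (j : ℕ) (u v : ℤ × ℤ) : Prop :=
  (u = pos f j + (0, 1) ∧ v = pos f j + (1, 0)) ∨
    (u = pos f j + (1, 0) ∧ v = pos f j + (0, 1))

/-- The step from `u` to `v` traverses an edge of `P`. -/
def EdgeStep (P : Finset Edge) (u v : ℤ × ℤ) : Prop :=
  ∃ e ∈ P, (u = e.1 ∧ v = ept e) ∨ (u = ept e ∧ v = e.1)

/-- `w` (restricted to indices `0,…,2d+1`) is an alternating walk for the perfect matching
`P`: it goes from `(0,0)` to `pos f d + (1,1)`, alternately traverses edges of `P` and tile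
diagonals, begins and ends with an edge of `P`, and traverses each of the `d` diagonals
exactly once. -/
def IsAltWalk (d : ℕ) (f : ℕ → Bool) (P : Finset Edge) (w : ℕ → ℤ × ℤ) : Prop :=
  w 0 = (0, 0) ∧ w (2 * d + 1) = pos f d + (1, 1) ∧
    (∀ i ≤ 2 * d, Even i → EdgeStep P (w i) (w (i + 1))) ∧
    (∀ i ≤ 2 * d, Odd i → ∃ j, 1 ≤ j ∧ j ≤ d ∧ DiagStep f j (w i) (w (i + 1))) ∧
    (∀ j, 1 ≤ j → j ≤ d → ∃! i, i ≤ 2 * d ∧ Odd i ∧ DiagStep f j (w i) (w (i + 1)))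

/-- The diagonal of tile `j` is oriented up with respect to the perfect matching `P`:
the alternating walk traverses it from `pos f j + (1,0)` to `pos f j + (0,1)`. -/
def OrientedUp (d : ℕ) (f : ℕ → Bool) (P : Finset Edge) (j : ℕ) : Prop :=
  ∃ w : ℕ → ℤ × ℤ, IsAltWalk d f P w ∧
    ∃ i ≤ 2 * d, Odd i ∧ w i = pos f j + (1, 0) ∧ w (i + 1) = pos f j + (0, 1)

/-- The diagonal of tile `j` is `ε`-oriented with respect to `P`. -/
def EpsOriented (d : ℕ) (f : ℕ → Bool) (ε : ℕ → ℤ) (P : Finset Edge) (j : ℕ) : Prop :=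
  (Odd j ∧ ((ε j = 1 ∧ ¬ OrientedUp d f P j) ∨ (ε j = -1 ∧ OrientedUp d f P j))) ∨
    (Even j ∧ ((ε j = 1 ∧ OrientedUp d f P j) ∨ (ε j = -1 ∧ ¬ OrientedUp d f P j)))

/-- The kind (`true` = type `1`, `false` = type `2`) of the `j`-th glued parallelogram. -/
def kind (f : ℕ → Bool) : ℕ → Bool
  | 0 => true
  | 1 => f 1
  | j + 2 => if f (j + 1) = f (j + 2) then !(kind f (j + 1)) else kind f (j + 1)

variable {K : Type*} [Field K]

/-- The tile matrix `m_j`. -/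
def tileMat (f : ℕ → Bool) (ε : ℕ → ℤ) (xi xA y : ℕ → K) (j : ℕ) :
    Matrix (Fin 2) (Fin 2) K :=
  if kind f j then
    if ε j = 1 then !![1, 0; xA j / (xi j * xi (j + 1)), y j]
    else !![y j, 0; xA j * y j / (xi j * xi (j + 1)), 1]
  else
    if ε j = 1 then !![xi (j + 1) / xi j, xA j * y j; 0, xi j * y j / xi (j + 1)]
    else !![xi (j + 1) * y j / xi j, xA j; 0, xi j / xi (j + 1)]

/-- The transfer matrix `Mmat f ε xi xA y d = m_{d-1} ⋯ m_1` (the identity for `d = 1`). -/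
def Mmat (f : ℕ → Bool) (ε : ℕ → ℤ) (xi xA y : ℕ → K) : ℕ → Matrix (Fin 2) (Fin 2) K
  | 0 => 1
  | 1 => 1
  | j + 2 => tileMat f ε xi xA y (j + 1) * Mmat f ε xi xA y (j + 1)

/-- The weight monomial `x(P)` of a matching `P`. -/
def xwt (wt : Edge → K) (P : Finset Edge) : K := ∏ e ∈ P, wt e

/-- The coefficient monomial `y(P)` of a matching `P`: the product of `y j` over the
tiles whose diagonal is `ε`-oriented with respect to `P`. -/
noncomputable def ywt (d : ℕ) (f : ℕ → Bool) (ε : ℕ → ℤ) (y : ℕ → K) (P : Finset Edge) : K :=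
  ∏ j ∈ (Finset.Icc 1 d).filter (fun j => EpsOriented d f ε P j), y j


/-! ### Auxiliary development -/

section Aux

/-- The level (coordinate sum) of a point. -/
def lvl (v : ℤ × ℤ) : ℤ := v.1 + v.2

/-- North-west corner of tile `j`. -/
def Apt (f : ℕ → Bool) (j : ℕ) : ℤ × ℤ := pos f j + (0, 1)

/-- South-east corner of tile `j`. -/
def Bpt (f : ℕ → Bool) (j : ℕ) : ℤ × ℤ := pos f j + (1, 0)

/-- The diagonal endpoint of tile `j` selected by `s` (`true` = SE). -/
def pt (f : ℕ → Bool) (j : ℕ) (s : Bool) : ℤ × ℤ := if s then Bpt f j else Apt f j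

lemma pos_succ (f : ℕ → Bool) (j : ℕ) (hj : 1 ≤ j) :
    pos f (j + 1) = pos f j + (if f j then ((0:ℤ), (1:ℤ)) else (1, 0)) := by
  obtain ⟨m, rfl⟩ := Nat.exists_eq_add_of_le' hj
  rfl

lemma lvl_pos (f : ℕ → Bool) : ∀ j, 1 ≤ j → lvl (pos f j) = (j : ℤ) - 1 := by
  intro j
  induction j with
  | zero => omega
  | succ n ih =>
    intro _
    rcases Nat.lt_or_ge n 1 with h | hn
    · interval_cases n
      · simp [pos, lvl]
    · rw [pos_succ f n hn]
      have := ih hn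
      rcases hf : f n <;> simp_all [lvl, Prod.fst_add, Prod.snd_add] <;> push_cast at * <;> omega

lemma lvl_Apt (f : ℕ → Bool) (j : ℕ) (hj : 1 ≤ j) : lvl (Apt f j) = (j : ℤ) := by
  have := lvl_pos f j hj
  simp [Apt, lvl, Prod.fst_add, Prod.snd_add] at *
  omega

lemma lvl_Bpt (f : ℕ → Bool) (j : ℕ) (hj : 1 ≤ j) : lvl (Bpt f j) = (j : ℤ) := by
  have := lvl_pos f j hj
  simp [Bpt, lvl, Prod.fst_add, Prod.snd_add] at *
  omega

lemma lvl_pt (f : ℕ → Bool) (j : ℕ) (s : Bool) (hj : 1 ≤ j) : lvl (pt f j s) = (j : ℤ) := by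
  cases s <;> simp [pt, lvl_Apt f j hj, lvl_Bpt f j hj]

lemma Apt_ne_Bpt (f : ℕ → Bool) (j : ℕ) : Apt f j ≠ Bpt f j := by
  intro h
  rw [Apt, Bpt, add_right_inj] at h
  simp [Prod.ext_iff] at h

lemma pt_inj (f : ℕ → Bool) {j j' : ℕ} {s s' : Bool} (hj : 1 ≤ j) (hj' : 1 ≤ j')
    (h : pt f j s = pt f j' s') : j = j' ∧ s = s' := by
  have hl : (j : ℤ) = (j' : ℤ) := by
    rw [← lvl_pt f j s hj, ← lvl_pt f j' s' hj', h]
  have hjj : j = j' := by exact_mod_cast hl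
  subst hjj
  refine ⟨rfl, ?_⟩
  cases s <;> cases s' <;> simp only [pt, if_true, if_false] at h <;>
    first
      | rfl
      | exact absurd h (Apt_ne_Bpt f j)
      | exact absurd h.symm (Apt_ne_Bpt f j)

lemma pos_add_diag (f : ℕ → Bool) (j : ℕ) (hj : 1 ≤ j) :
    pos f j + (1, 1) = if f j then Bpt f (j + 1) else Apt f (j + 1) := by
  rcases hf : f j <;>
    simp [Apt, Bpt, pos_succ f j hj, hf, Prod.ext_iff, Prod.fst_add, Prod.snd_add] <;> ring_nf <;> omega

lemma pos_eq_pt (f : ℕ → Bool) (j : ℕ) (hj : 1 ≤ j) :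
    pos f (j + 1) = pt f j (!(f j)) := by
  rcases hf : f j <;> simp [pt, Apt, Bpt, pos_succ f j hj, hf]

lemma ept_ne (e : Edge) : ept e ≠ e.1 := by
  rcases e with ⟨v, b⟩
  cases b <;> simp [ept, Prod.ext_iff] <;> omega

lemma lvl_ept (e : Edge) : lvl (ept e) = lvl e.1 + 1 := by
  rcases e with ⟨v, b⟩
  cases b <;> simp [ept, lvl, Prod.fst_add, Prod.snd_add] <;> ring

/- Edge endpoint computations. -/
lemma S_base (f : ℕ → Bool) (j : ℕ) : (S f j).1 = pos f j := rfl
lemma S_ept (f : ℕ → Bool) (j : ℕ) : ept (S f j) = Bpt f j := rfl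
lemma N_base (f : ℕ → Bool) (j : ℕ) : (N f j).1 = Apt f j := rfl
lemma N_ept (f : ℕ → Bool) (j : ℕ) : ept (N f j) = pos f j + (1, 1) := by
  simp [N, ept, Apt, Prod.ext_iff, Prod.fst_add, Prod.snd_add]
lemma W_base (f : ℕ → Bool) (j : ℕ) : (W f j).1 = pos f j := rfl
lemma W_ept (f : ℕ → Bool) (j : ℕ) : ept (W f j) = Apt f j := rfl
lemma Ed_base (f : ℕ → Bool) (j : ℕ) : (Ed f j).1 = Bpt f j := rfl
lemma Ed_ept (f : ℕ → Bool) (j : ℕ) : ept (Ed f j) = pos f j + (1, 1) := by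
  simp [Ed, ept, Bpt, Prod.ext_iff, Prod.fst_add, Prod.snd_add]

end Aux


section Aux2

/-- First matching edge (covering `(0,0)`), by in-state of tile 1. -/
def E0 (f : ℕ → Bool) (s : Bool) : Edge := if s then S f 1 else W f 1

/-- Last matching edge (covering `pos f d + (1,1)`), by out-state of tile `d`. -/
def ElastO (f : ℕ → Bool) (d : ℕ) (s : Bool) : Edge := if s then Ed f d else N f d

/-- Matching edge from `pt f j so` (out-state of tile `j`) to `pt f (j+1) si`. -/
def EmidO (f : ℕ → Bool) (j : ℕ) (so si : Bool) : Edge :=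
  if f j then (if so then Ed f j else if si then N f j else W f (j + 1))
  else (if so then (if si then S f (j + 1) else Ed f j) else N f j)

/-- The transition `(so, si)` is geometrically possible across boundary `j`. -/
def allowed (f : ℕ → Bool) (j : ℕ) (so si : Bool) : Prop :=
  if f j then ¬(so = true ∧ si = false) else ¬(so = false ∧ si = true)

lemma E0_base (f : ℕ → Bool) (s : Bool) : (E0 f s).1 = (0, 0) := by
  cases s <;> simp [E0, S, W, pos]

lemma E0_ept (f : ℕ → Bool) (s : Bool) : ept (E0 f s) = pt f 1 s := by
  cases s <;> simp [E0, S_ept, W_ept, pt]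

lemma ElastO_base (f : ℕ → Bool) (d : ℕ) (s : Bool) : (ElastO f d s).1 = pt f d s := by
  cases s <;> simp [ElastO, N_base, Ed_base, pt]

lemma ElastO_ept (f : ℕ → Bool) (d : ℕ) (s : Bool) : ept (ElastO f d s) = pos f d + (1, 1) := by
  cases s <;> simp [ElastO, N_ept, Ed_ept]

lemma EmidO_base (f : ℕ → Bool) (j : ℕ) (so si : Bool) (hj : 1 ≤ j) :
    (EmidO f j so si).1 = pt f j so := by
  rcases hf : f j <;> cases so <;> cases si <;>
    simp [EmidO, hf, N_base, Ed_base, W_base, S_base, pt, pos_eq_pt f j hj, Apt, Bpt]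

lemma EmidO_ept (f : ℕ → Bool) (j : ℕ) (so si : Bool) (hj : 1 ≤ j)
    (hall : allowed f j so si) : ept (EmidO f j so si) = pt f (j + 1) si := by
  rcases hf : f j <;> cases so <;> cases si <;>
    simp_all [allowed, EmidO, hf, N_ept, Ed_ept, W_ept, S_ept, pt,
      pos_add_diag f j hj, pos_eq_pt f j hj, Apt, Bpt] <;>
    (try (simp [Prod.ext_iff, Prod.fst_add, Prod.snd_add, Prod.fst_one, Prod.snd_one]; try omega))

lemma mem_edges_iff (d : ℕ) (f : ℕ → Bool) (e : Edge) :
    e ∈ edges d f ↔ ∃ j, 1 ≤ j ∧ j ≤ d ∧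
      (e = S f j ∨ e = N f j ∨ e = W f j ∨ e = Ed f j) := by
  simp [edges, Finset.mem_biUnion, Finset.mem_Icc, Finset.mem_insert, Finset.mem_singleton]
  constructor
  · rintro ⟨j, ⟨h1, h2⟩, h⟩; exact ⟨j, h1, h2, h⟩
  · rintro ⟨j, h1, h2, h⟩; exact ⟨j, ⟨h1, h2⟩, h⟩

lemma S_mem_edges (d : ℕ) (f : ℕ → Bool) (j : ℕ) (h1 : 1 ≤ j) (h2 : j ≤ d) :
    S f j ∈ edges d f := (mem_edges_iff d f _).2 ⟨j, h1, h2, Or.inl rfl⟩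
lemma N_mem_edges (d : ℕ) (f : ℕ → Bool) (j : ℕ) (h1 : 1 ≤ j) (h2 : j ≤ d) :
    N f j ∈ edges d f := (mem_edges_iff d f _).2 ⟨j, h1, h2, Or.inr (Or.inl rfl)⟩
lemma W_mem_edges (d : ℕ) (f : ℕ → Bool) (j : ℕ) (h1 : 1 ≤ j) (h2 : j ≤ d) :
    W f j ∈ edges d f := (mem_edges_iff d f _).2 ⟨j, h1, h2, Or.inr (Or.inr (Or.inl rfl))⟩
lemma Ed_mem_edges (d : ℕ) (f : ℕ → Bool) (j : ℕ) (h1 : 1 ≤ j) (h2 : j ≤ d) :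
    Ed f j ∈ edges d f := (mem_edges_iff d f _).2 ⟨j, h1, h2, Or.inr (Or.inr (Or.inr rfl))⟩

lemma E0_mem_edges (d : ℕ) (f : ℕ → Bool) (s : Bool) (hd : 1 ≤ d) : E0 f s ∈ edges d f := by
  cases s <;> simp only [E0, if_true, if_false] <;>
    [exact W_mem_edges d f 1 le_rfl hd; exact S_mem_edges d f 1 le_rfl hd]

lemma ElastO_mem_edges (d : ℕ) (f : ℕ → Bool) (s : Bool) (hd : 1 ≤ d) :
    ElastO f d s ∈ edges d f := by
  cases s <;> simp only [ElastO, if_true, if_false] <;>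
    [exact N_mem_edges d f d hd le_rfl; exact Ed_mem_edges d f d hd le_rfl]

lemma EmidO_mem_edges (d : ℕ) (f : ℕ → Bool) (j : ℕ) (so si : Bool)
    (h1 : 1 ≤ j) (h2 : j + 1 ≤ d) : EmidO f j so si ∈ edges d f := by
  rcases hf : f j <;> cases so <;> cases si <;> simp only [EmidO, hf, if_true, if_false] <;>
    first
      | exact S_mem_edges d f (j+1) (by omega) h2
      | exact N_mem_edges d f j h1 (by omega)
      | exact W_mem_edges d f (j+1) (by omega) h2
      | exact Ed_mem_edges d f j h1 (by omega)

/-- Membership of the named vertices in `verts`. -/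
lemma origin_mem_verts (d : ℕ) (f : ℕ → Bool) (hd : 1 ≤ d) : ((0,0) : ℤ × ℤ) ∈ verts d f := by
  simp only [verts, Finset.mem_biUnion, Finset.mem_Icc]
  exact ⟨1, ⟨le_rfl, hd⟩, by simp [pos]⟩

lemma top_mem_verts (d : ℕ) (f : ℕ → Bool) (hd : 1 ≤ d) : pos f d + (1,1) ∈ verts d f := by
  simp only [verts, Finset.mem_biUnion, Finset.mem_Icc]
  exact ⟨d, ⟨hd, le_rfl⟩, by simp⟩

lemma pt_mem_verts (d : ℕ) (f : ℕ → Bool) (j : ℕ) (s : Bool) (h1 : 1 ≤ j) (h2 : j ≤ d) :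
    pt f j s ∈ verts d f := by
  simp only [verts, Finset.mem_biUnion, Finset.mem_Icc]
  refine ⟨j, ⟨h1, h2⟩, ?_⟩
  cases s <;> simp [pt, Apt, Bpt]

/-- Characterization of the vertices of the snake graph. -/
lemma verts_char (d : ℕ) (f : ℕ → Bool) (v : ℤ × ℤ) (hd : 1 ≤ d) (hv : v ∈ verts d f) :
    v = (0, 0) ∨ v = pos f d + (1, 1) ∨ ∃ j s, 1 ≤ j ∧ j ≤ d ∧ v = pt f j s := by
  simp only [verts, Finset.mem_biUnion, Finset.mem_Icc, Finset.mem_insert,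
    Finset.mem_singleton] at hv
  obtain ⟨j, ⟨h1, h2⟩, hv⟩ := hv
  rcases hv with rfl | rfl | rfl | rfl
  · -- v = pos f j
    rcases Nat.eq_or_lt_of_le h1 with h | h
    · left; rw [← h]; rfl
    · right; right
      obtain ⟨m, rfl⟩ := Nat.exists_eq_add_of_le (by omega : 1 + 1 ≤ j)
      refine ⟨1 + m, !(f (1 + m)), by omega, by omega, ?_⟩
      rw [show 1 + 1 + m = (1 + m) + 1 by ring]
      exact pos_eq_pt f (1 + m) (by omega)
  · right; right; exact ⟨j, true, h1, h2, rfl⟩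
  · right; right; exact ⟨j, false, h1, h2, rfl⟩
  · -- v = pos f j + (1,1)
    rcases Nat.eq_or_lt_of_le h2 with h | h
    · right; left; rw [h]
    · right; right
      refine ⟨j + 1, f j, by omega, by omega, ?_⟩
      rw [pos_add_diag f j h1]
      rcases hf : f j <;> simp [pt, hf]

end Aux2


section Aux3

variable (d : ℕ) (f : ℕ → Bool)

/-- The `k`-th edge of the matching associated to the orientation sequence `u`. -/
def eAt (u : ℕ → Bool) (k : ℕ) : Edge :=
  if k = 0 then E0 f (u 1) else if k = d then ElastO f d (!(u d))
  else EmidO f k (!(u k)) (u (k + 1))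

/-- The perfect matching associated to an orientation sequence. -/
def Pm (u : ℕ → Bool) : Finset Edge := (Finset.range (d + 1)).image (eAt d f u)

/-- Validity of an orientation sequence. -/
def ValidU (u : ℕ → Bool) : Prop := ∀ j, 1 ≤ j → j + 1 ≤ d → allowed f j (!(u j)) (u (j + 1))

variable {d f}

lemma eAt_base (hd : 1 ≤ d) (u : ℕ → Bool) (k : ℕ) (hk : k ≤ d) :
    (eAt d f u k).1 = if k = 0 then ((0:ℤ), (0:ℤ)) else pt f k (!(u k)) := by
  rcases Nat.eq_zero_or_pos k with rfl | hk1
  · simp [eAt, E0_base]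
  · rcases Nat.eq_or_lt_of_le hk with rfl | hlt
    · have hk0 : ¬ k = 0 := by omega
      simp [eAt, hk0, ElastO_base]
    · simp only [eAt, if_neg (by omega : ¬ k = 0), if_neg (by omega : ¬ k = d)]
      rw [EmidO_base f k _ _ hk1]

lemma lvl_eAt_base (hd : 1 ≤ d) (u : ℕ → Bool) (k : ℕ) (hk : k ≤ d) :
    lvl ((eAt d f u k).1) = (k : ℤ) := by
  rw [eAt_base hd u k hk]
  rcases Nat.eq_zero_or_pos k with rfl | hk1
  · simp [lvl]
  · rw [if_neg (by omega)]; exact lvl_pt f k _ hk1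

lemma eAt_ept (hd : 1 ≤ d) (u : ℕ → Bool) (hu : ValidU d f u) (k : ℕ) (hk : k ≤ d) :
    ept (eAt d f u k) = if k = d then pos f d + (1, 1) else pt f (k + 1) (u (k + 1)) := by
  rcases Nat.eq_or_lt_of_le hk with rfl | hlt
  · rcases Nat.eq_zero_or_pos k with h | hk1
    · omega
    · have hk0 : ¬ k = 0 := by omega
      simp [eAt, hk0, ElastO_ept]
  · rcases Nat.eq_zero_or_pos k with rfl | hk1
    · simp [eAt, E0_ept, if_neg (by omega : ¬ (0:ℕ) = d)]
    · simp only [eAt, if_neg (by omega : ¬ k = 0), if_neg (by omega : ¬ k = d)]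
      rw [EmidO_ept f k _ _ hk1 (hu k hk1 (by omega))]

lemma eAt_inj (hd : 1 ≤ d) (u : ℕ → Bool) {k k' : ℕ} (hk : k ≤ d) (hk' : k' ≤ d)
    (h : eAt d f u k = eAt d f u k') : k = k' := by
  have h2 := lvl_eAt_base (f := f) hd u k hk
  rw [h, lvl_eAt_base (f := f) hd u k' hk'] at h2
  omega

lemma Pm_subset_edges (hd : 1 ≤ d) (u : ℕ → Bool) : Pm d f u ⊆ edges d f := by
  intro e he
  simp only [Pm, Finset.mem_image, Finset.mem_range] at he
  obtain ⟨k, hk, rfl⟩ := he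
  rcases Nat.eq_zero_or_pos k with rfl | hk1
  · simpa [eAt] using E0_mem_edges d f (u 1) hd
  · rcases Nat.eq_or_lt_of_le (by omega : k ≤ d) with rfl | hlt
    · simp only [eAt, if_neg (by omega : ¬ k = 0), eq_self_iff_true, if_true]
      exact ElastO_mem_edges _ f _ hd
    · simp only [eAt, if_neg (by omega : ¬ k = 0), if_neg (by omega : ¬ k = d)]
      exact EmidO_mem_edges d f k _ _ hk1 (by omega)

lemma mem_Pm_iff (u : ℕ → Bool) (e : Edge) :
    e ∈ Pm d f u ↔ ∃ k ≤ d, e = eAt d f u k := by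
  simp only [Pm, Finset.mem_image, Finset.mem_range]
  constructor
  · rintro ⟨k, hk, rfl⟩; exact ⟨k, by omega, rfl⟩
  · rintro ⟨k, hk, rfl⟩; exact ⟨k, by omega, rfl⟩

/-- The unique covering property for `Pm`. -/
lemma Pm_cover (hd : 1 ≤ d) (u : ℕ → Bool) (hu : ValidU d f u)
    (v : ℤ × ℤ) (hv : v ∈ verts d f) : ∃! e, e ∈ Pm d f u ∧ covers e v := by
  have key : ∀ k ≤ d, ∀ dir : Bool,
      ((eAt d f u k).1 = v → dir = true) →
      (ept (eAt d f u k) = v → dir = false) → True := fun _ _ _ _ _ => trivial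
  rcases verts_char d f v hd hv with rfl | rfl | ⟨j, s, h1, h2, rfl⟩
  · -- v = (0,0)
    refine ⟨eAt d f u 0, ⟨(mem_Pm_iff u _).2 ⟨0, by omega, rfl⟩, Or.inl ?_⟩, ?_⟩
    · rw [eAt_base hd u 0 (by omega)]; simp
    · rintro e ⟨he, hcov⟩
      obtain ⟨k, hk, rfl⟩ := (mem_Pm_iff u e).1 he
      have hbase := lvl_eAt_base (f := f) hd u k hk
      rcases hcov with h | h
      · -- (0,0) = base
        have : (k : ℤ) = 0 := by rw [← hbase, ← h]; simp [lvl]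
        have : k = 0 := by exact_mod_cast this
        subst this; rfl
      · -- (0,0) = ept: impossible
        exfalso
        have hle := lvl_ept (eAt d f u k)
        rw [← h, hbase] at hle
        have h0 : lvl ((0,0) : ℤ × ℤ) = 0 := rfl
        omega
  · -- v = top
    refine ⟨eAt d f u d, ⟨(mem_Pm_iff u _).2 ⟨d, le_rfl, rfl⟩, Or.inr ?_⟩, ?_⟩
    · rw [eAt_ept hd u hu d le_rfl]; simp
    · rintro e ⟨he, hcov⟩
      obtain ⟨k, hk, rfl⟩ := (mem_Pm_iff u e).1 he
      have hbase := lvl_eAt_base (f := f) hd u k hk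
      have htop : lvl (pos f d + (1, 1)) = (d : ℤ) + 1 := by
        have := lvl_pos f d hd
        simp [lvl, Prod.fst_add, Prod.snd_add] at *
        omega
      rcases hcov with h | h
      · exfalso
        rw [← h] at hbase
        omega
      · have := lvl_ept (eAt d f u k)
        rw [← h, htop, hbase] at this
        have : k = d := by omega
        subst this; rfl
  · -- v = pt f j s
    have hbases : ∀ k ≤ d, covers (eAt d f u k) (pt f j s) →
        (k = j ∧ (eAt d f u k).1 = pt f j s) ∨ (k + 1 = j ∧ ept (eAt d f u k) = pt f j s) := by
      intro k hk hcov
      have hbase := lvl_eAt_base (f := f) hd u k hk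
      have hvl := lvl_pt f j s h1
      rcases hcov with h | h
      · left
        have : (k : ℤ) = (j : ℤ) := by rw [← hbase, ← h, hvl]
        exact ⟨by exact_mod_cast this, h.symm⟩
      · right
        have := lvl_ept (eAt d f u k)
        rw [← h, hvl, hbase] at this
        exact ⟨by omega, h.symm⟩
    by_cases hs : u j = s
    · -- covered from below by eAt (j-1)
      refine ⟨eAt d f u (j - 1), ⟨(mem_Pm_iff u _).2 ⟨j - 1, by omega, rfl⟩, Or.inr ?_⟩, ?_⟩
      · rw [eAt_ept hd u hu (j - 1) (by omega), if_neg (by omega)]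
        rw [show j - 1 + 1 = j by omega, hs]
      · rintro e ⟨he, hcov⟩
        obtain ⟨k, hk, rfl⟩ := (mem_Pm_iff u e).1 he
        rcases hbases k hk hcov with ⟨rfl, h⟩ | ⟨hkj, h⟩
        · -- base = pt j s: but base = pt j (!u j) = pt j (!s): contradiction
          exfalso
          rw [eAt_base hd u k hk, if_neg (by omega)] at h
          have := (pt_inj f h1 h1 h).2
          rw [hs] at this
          simp at this
        · congr 1; omega
    · -- covered from above by eAt j
      have hs' : (!(u j)) = s := by
        cases s <;> cases hsu : u j <;> simp_all
      refine ⟨eAt d f u j, ⟨(mem_Pm_iff u _).2 ⟨j, h2, rfl⟩, Or.inl ?_⟩, ?_⟩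
      · rw [eAt_base hd u j h2, if_neg (by omega), hs']
      · rintro e ⟨he, hcov⟩
        obtain ⟨k, hk, rfl⟩ := (mem_Pm_iff u e).1 he
        rcases hbases k hk hcov with ⟨rfl, h⟩ | ⟨hkj, h⟩
        · rfl
        · exfalso
          rw [eAt_ept hd u hu k hk] at h
          rcases Nat.eq_or_lt_of_le hk with rfl | hlt
          · omega
          · rw [if_neg (by omega), hkj] at h
            have := (pt_inj f h1 h1 h).2
            exact hs this

lemma Pm_mem_matchings (hd : 1 ≤ d) (u : ℕ → Bool) (hu : ValidU d f u) :
    Pm d f u ∈ matchings d f := by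
  simp only [matchings, Finset.mem_filter, Finset.mem_powerset]
  exact ⟨Pm_subset_edges hd u, Pm_subset_edges hd u, fun v hv => Pm_cover hd u hu v hv⟩

end Aux3


section Aux4

variable (d : ℕ) (f : ℕ → Bool)

/-- The canonical alternating walk associated to an orientation sequence. -/
def wlk (u : ℕ → Bool) (i : ℕ) : ℤ × ℤ :=
  if i = 0 then (0, 0) else if 2 * d + 1 ≤ i then pos f d + (1, 1)
  else if i % 2 = 1 then pt f ((i + 1) / 2) (u ((i + 1) / 2)) else pt f (i / 2) (!(u (i / 2)))

variable {d f}

lemma wlk_odd (u : ℕ → Bool) (j : ℕ) (h1 : 1 ≤ j) (h2 : j ≤ d) :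
    wlk d f u (2 * j - 1) = pt f j (u j) := by
  have h : (2 * j - 1 + 1) / 2 = j := by omega
  rw [wlk, if_neg (by omega), if_neg (by omega), if_pos (by omega), h]

lemma wlk_even (u : ℕ → Bool) (j : ℕ) (h1 : 1 ≤ j) (h2 : j ≤ d) :
    wlk d f u (2 * j) = pt f j (!(u j)) := by
  have h : 2 * j / 2 = j := by omega
  rw [wlk, if_neg (by omega), if_neg (by omega), if_neg (by omega), h]

lemma wlk_zero (u : ℕ → Bool) : wlk d f u 0 = (0, 0) := by simp [wlk]

lemma wlk_top (u : ℕ → Bool) : wlk d f u (2 * d + 1) = pos f d + (1, 1) := by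
  rw [wlk, if_neg (by omega), if_pos le_rfl]

/-- The canonical walk is an alternating walk for `Pm u`. -/
lemma isAltWalk_wlk (hd : 1 ≤ d) (u : ℕ → Bool) (hu : ValidU d f u) :
    IsAltWalk d f (Pm d f u) (wlk d f u) := by
  refine ⟨wlk_zero u, wlk_top u, ?_, ?_, ?_⟩
  · -- even steps
    intro i hi hev
    obtain ⟨k, rfl⟩ := hev
    have hk : k ≤ d := by omega
    refine ⟨eAt d f u k, (mem_Pm_iff u _).2 ⟨k, hk, rfl⟩, Or.inl ⟨?_, ?_⟩⟩
    · rcases Nat.eq_zero_or_pos k with rfl | hk1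
      · rw [show (0:ℕ) + 0 = 0 from rfl, wlk_zero, eAt_base hd u 0 (Nat.zero_le d)]; simp
      · rw [show k + k = 2 * k by omega, wlk_even u k hk1 hk,
          eAt_base hd u k hk, if_neg (by omega)]
    · rw [eAt_ept hd u hu k hk]
      rcases Nat.eq_or_lt_of_le hk with rfl | hlt
      · rw [if_pos rfl, show k + k + 1 = 2 * k + 1 by omega, wlk_top]
      · rw [if_neg (by omega), show k + k + 1 = 2 * (k + 1) - 1 by omega,
          wlk_odd u (k + 1) (by omega) (by omega)]
  · -- odd steps
    intro i hi hodd
    obtain ⟨k, rfl⟩ := hodd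
    have hk : k + 1 ≤ d := by omega
    refine ⟨k + 1, by omega, hk, ?_⟩
    have h1 : wlk d f u (2 * k + 1) = pt f (k + 1) (u (k + 1)) := by
      rw [show 2 * k + 1 = 2 * (k + 1) - 1 by omega, wlk_odd u (k + 1) (by omega) hk]
    have h2 : wlk d f u (2 * k + 1 + 1) = pt f (k + 1) (!(u (k + 1))) := by
      rw [show 2 * k + 1 + 1 = 2 * (k + 1) by omega, wlk_even u (k + 1) (by omega) hk]
    rw [h1, h2]
    rcases hs : u (k + 1)
    · left; simp [pt, Apt, Bpt]
    · right; simp [pt, Apt, Bpt]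
  · -- uniqueness of diagonal traversal
    intro j h1 h2
    refine ⟨2 * j - 1, ⟨by omega, ⟨j - 1, by omega⟩, ?_⟩, ?_⟩
    · rw [wlk_odd u j h1 h2, show 2 * j - 1 + 1 = 2 * j by omega, wlk_even u j h1 h2]
      rcases hs : u j
      · left; simp [pt, Apt, Bpt]
      · right; simp [pt, Apt, Bpt]
    · rintro i ⟨hi, ⟨k, rfl⟩, hdiag⟩
      -- level argument: the diagonal of tile j is at level j
      have hwi : wlk d f u (2 * k + 1) = pt f (k + 1) (u (k + 1)) := by
        rw [show 2 * k + 1 = 2 * (k + 1) - 1 by omega, wlk_odd u (k + 1) (by omega) (by omega)]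
      have hlv : lvl (wlk d f u (2 * k + 1)) = (k + 1 : ℕ) := by
        rw [hwi]; exact_mod_cast lvl_pt f (k + 1) _ (by omega)
      have hlv2 : lvl (wlk d f u (2 * k + 1)) = (j : ℤ) := by
        rcases hdiag with ⟨ha, _⟩ | ⟨ha, _⟩
        · rw [ha]
          have := lvl_Apt f j h1
          simpa [Apt] using this
        · rw [ha]
          have := lvl_Bpt f j h1
          simpa [Bpt] using this
      have : k + 1 = j := by
        rw [hlv] at hlv2
        exact_mod_cast hlv2
      omega

/-- Uniqueness of alternating walks for `Pm u`. -/
lemma altWalk_unique (hd : 1 ≤ d) (u : ℕ → Bool) (hu : ValidU d f u)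
    (w : ℕ → ℤ × ℤ) (hw : IsAltWalk d f (Pm d f u) w) :
    ∀ i, i ≤ 2 * d + 1 → w i = wlk d f u i := by
  obtain ⟨hw0, hwtop, hwe, hwo, _⟩ := hw
  have hstep : ∀ i, i ≤ 2 * d → w i = wlk d f u i → w (i + 1) = wlk d f u (i + 1) := by
    intro i hi hagree
    rcases Nat.even_or_odd i with hev | hodd
    · -- edge step
      have h1 := hwe i hi hev
      have h2 := (isAltWalk_wlk hd u hu).2.2.1 i hi hev
      obtain ⟨e, he, hee⟩ := h1
      obtain ⟨e', he', hee'⟩ := h2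
      -- both e and e' cover wlk u i
      have hviv : wlk d f u i ∈ verts d f := by
        obtain ⟨k, rfl⟩ := hev
        rcases Nat.eq_zero_or_pos k with rfl | hk1
        · rw [show (0:ℕ) + 0 = 0 from rfl, wlk_zero]
          exact origin_mem_verts d f hd
        · rw [show k + k = 2 * k by omega, wlk_even u k hk1 (by omega)]
          exact pt_mem_verts d f k _ hk1 (by omega)
      obtain ⟨g, _, hgu⟩ := Pm_cover hd u hu _ hviv
      have hce : covers e (wlk d f u i) := by
        rcases hee with ⟨ha, _⟩ | ⟨ha, _⟩
        · exact Or.inl (by rw [← hagree, ha])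
        · exact Or.inr (by rw [← hagree, ha])
      have hce' : covers e' (wlk d f u i) := by
        rcases hee' with ⟨ha, _⟩ | ⟨ha, _⟩
        · exact Or.inl (by rw [ha])
        · exact Or.inr (by rw [ha])
      have heq : e = e' := by
        rw [hgu e ⟨he, hce⟩, hgu e' ⟨he', hce'⟩]
      subst heq
      -- now determine the next vertex
      rcases hee with ⟨ha, hb⟩ | ⟨ha, hb⟩ <;> rcases hee' with ⟨ha', hb'⟩ | ⟨ha', hb'⟩
      · rw [hb, hb']
      · exfalso; exact ept_ne e (by rw [← ha', ← hagree, ha])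
      · exfalso; exact ept_ne e (by rw [← ha, hagree, ha'])
      · rw [hb, hb']
    · -- diagonal step
      have h1 := hwo i hi hodd
      obtain ⟨j, hj1, hj2, hdiag⟩ := h1
      obtain ⟨k, rfl⟩ := hodd
      have hk1 : k + 1 ≤ d := by omega
      have hwi : wlk d f u (2 * k + 1) = pt f (k + 1) (u (k + 1)) := by
        rw [show 2 * k + 1 = 2 * (k + 1) - 1 by omega, wlk_odd u (k + 1) (by omega) hk1]
      -- identify j = k + 1 via levels
      have hjeq : j = k + 1 := by
        have hlv2 : lvl (w (2 * k + 1)) = (j : ℤ) := by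
          rcases hdiag with ⟨ha, _⟩ | ⟨ha, _⟩
          · rw [ha]; simpa [Apt] using lvl_Apt f j hj1
          · rw [ha]; simpa [Bpt] using lvl_Bpt f j hj1
        rw [hagree, hwi] at hlv2
        have := lvl_pt f (k + 1) (u (k + 1)) (by omega)
        rw [this] at hlv2
        exact_mod_cast hlv2.symm
      subst hjeq
      have hnext : wlk d f u (2 * k + 1 + 1) = pt f (k + 1) (!(u (k + 1))) := by
        rw [show 2 * k + 1 + 1 = 2 * (k + 1) by omega, wlk_even u (k + 1) (by omega) hk1]
      rw [hnext]
      rw [hagree, hwi] at hdiag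
      rcases hdiag with ⟨ha, hb⟩ | ⟨ha, hb⟩
      · -- pt (u (k+1)) = Apt, so u (k+1) = false, next is Bpt
        have : u (k + 1) = false := by
          rcases hs : u (k + 1)
          · rfl
          · exfalso; rw [hs] at ha; exact Apt_ne_Bpt f (k + 1) ha.symm
        rw [hb, this]; simp [pt, Apt, Bpt]
      · have : u (k + 1) = true := by
          rcases hs : u (k + 1)
          · exfalso; rw [hs] at ha; exact Apt_ne_Bpt f (k + 1) ha
          · rfl
        rw [hb, this]; simp [pt, Apt, Bpt]
  intro i
  induction i with
  | zero => intro _; rw [hw0, wlk_zero]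
  | succ n ih => intro hn; exact hstep n (by omega) (ih (by omega))

/-- Orientation of the diagonals of `Pm u`. -/
lemma orientedUp_iff (hd : 1 ≤ d) (u : ℕ → Bool) (hu : ValidU d f u)
    (j : ℕ) (h1 : 1 ≤ j) (h2 : j ≤ d) :
    OrientedUp d f (Pm d f u) j ↔ u j = true := by
  constructor
  · rintro ⟨w, hw, i, hi, hodd, hup, _⟩
    have hag := altWalk_unique hd u hu w hw i (by omega)
    obtain ⟨k, rfl⟩ := hodd
    have hwi : wlk d f u (2 * k + 1) = pt f (k + 1) (u (k + 1)) := by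
      rw [show 2 * k + 1 = 2 * (k + 1) - 1 by omega, wlk_odd u (k + 1) (by omega) (by omega)]
    rw [hag, hwi] at hup
    -- pt (k+1) (u (k+1)) = Bpt j : levels give k+1 = j, then u j = true
    have : pt f (k + 1) (u (k + 1)) = pt f j true := hup
    obtain ⟨hjj, hss⟩ := pt_inj f (by omega) h1 this
    rw [← hjj, hss]
  · intro hs
    refine ⟨wlk d f u, isAltWalk_wlk hd u hu, 2 * j - 1, by omega, ⟨j - 1, by omega⟩, ?_, ?_⟩
    · rw [wlk_odd u j h1 h2, hs]; rfl
    · rw [show 2 * j - 1 + 1 = 2 * j by omega, wlk_even u j h1 h2, hs]; rfl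

/-- `ε`-orientation of the diagonals of `Pm u`. -/
lemma epsOriented_iff (hd : 1 ≤ d) (u : ℕ → Bool) (hu : ValidU d f u) (ε : ℕ → ℤ)
    (j : ℕ) (h1 : 1 ≤ j) (h2 : j ≤ d) :
    EpsOriented d f ε (Pm d f u) j ↔
      ((Odd j ∧ ((ε j = 1 ∧ u j = false) ∨ (ε j = -1 ∧ u j = true))) ∨
       (Even j ∧ ((ε j = 1 ∧ u j = true) ∨ (ε j = -1 ∧ u j = false)))) := by
  have hO := orientedUp_iff hd u hu j h1 h2
  unfold EpsOriented
  rw [hO]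
  rcases hs : u j <;> simp [hs]

end Aux4


section Aux5

variable {d : ℕ} {f : ℕ → Bool}

lemma pt_eq_pos {j k : ℕ} {s : Bool} (hj : 1 ≤ j) (hk : 1 ≤ k)
    (h : pt f j s = pos f k) : k = j + 1 ∧ s = !(f j) := by
  have hl : (j : ℤ) = (k : ℤ) - 1 := by
    rw [← lvl_pt f j s hj, h, lvl_pos f k hk]
  have hk' : k = j + 1 := by omega
  subst hk'
  rw [pos_eq_pt f j hj] at h
  obtain ⟨-, hs⟩ := pt_inj f hj hj h
  exact ⟨rfl, hs⟩

lemma pt_eq_Apt {j k : ℕ} {s : Bool} (hj : 1 ≤ j) (hk : 1 ≤ k)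
    (h : pt f j s = Apt f k) : j = k ∧ s = false := by
  have h' : pt f j s = pt f k false := h
  obtain ⟨hj', hs⟩ := pt_inj f hj hk h'
  exact ⟨hj', hs⟩

lemma pt_eq_Bpt {j k : ℕ} {s : Bool} (hj : 1 ≤ j) (hk : 1 ≤ k)
    (h : pt f j s = Bpt f k) : j = k ∧ s = true := by
  have h' : pt f j s = pt f k true := h
  obtain ⟨hj', hs⟩ := pt_inj f hj hk h'
  exact ⟨hj', hs⟩

lemma pos_diag_eq_pt (k : ℕ) (hk : 1 ≤ k) : pos f k + (1, 1) = pt f (k + 1) (f k) := by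
  rw [pos_add_diag f k hk]
  rcases hf : f k <;> simp [pt, hf]

lemma pt_eq_diag {j k : ℕ} {s : Bool} (hj : 1 ≤ j) (hk : 1 ≤ k)
    (h : pt f j s = pos f k + (1, 1)) : j = k + 1 ∧ s = f k := by
  rw [pos_diag_eq_pt k hk] at h
  obtain ⟨hj', hs⟩ := pt_inj f hj (by omega) h
  exact ⟨hj', hs⟩

lemma inc0 (e : Edge) (he : e ∈ edges d f) (hc : covers e ((0, 0) : ℤ × ℤ)) :
    e = S f 1 ∨ e = W f 1 := by
  obtain ⟨k, hk1, hk2, hsh⟩ := (mem_edges_iff d f e).1 he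
  have hept : ∀ (h : (0, 0) = ept e), False := by
    intro h
    have h1 := lvl_ept e
    have hbl : (0 : ℤ) ≤ lvl e.1 := by
      rcases hsh with rfl | rfl | rfl | rfl
      · rw [S_base, lvl_pos f k hk1]; omega
      · rw [N_base, lvl_Apt f k hk1]; omega
      · rw [W_base, lvl_pos f k hk1]; omega
      · rw [Ed_base, lvl_Bpt f k hk1]; omega
    rw [← h] at h1
    have : lvl ((0,0) : ℤ × ℤ) = 0 := rfl
    omega
  rcases hc with h | h
  · rcases hsh with rfl | rfl | rfl | rfl
    · left
      have : (k : ℤ) - 1 = 0 := by rw [← lvl_pos f k hk1, ← S_base f k, ← h]; rfl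
      have : k = 1 := by omega
      rw [this]
    · exfalso
      have : (k : ℤ) = 0 := by rw [← lvl_Apt f k hk1, ← N_base f k, ← h]; rfl
      omega
    · right
      have : (k : ℤ) - 1 = 0 := by rw [← lvl_pos f k hk1, ← W_base f k, ← h]; rfl
      have : k = 1 := by omega
      rw [this]
    · exfalso
      have : (k : ℤ) = 0 := by rw [← lvl_Bpt f k hk1, ← Ed_base f k, ← h]; rfl
      omega
  · exact absurd h hept

/-- Master incidence lemma: classification of graph edges covering a diagonal vertex. -/
lemma inc (e : Edge) (he : e ∈ edges d f) (j : ℕ) (s : Bool) (h1 : 1 ≤ j) (h2 : j ≤ d)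
    (hc : covers e (pt f j s)) :
    (e.1 = pt f j s ∧ ((j = d ∧ e = ElastO f d s) ∨
        (j < d ∧ ∃ si, allowed f j s si ∧ e = EmidO f j s si))) ∨
    (ept e = pt f j s ∧ ((j = 1 ∧ e = E0 f s) ∨
        (2 ≤ j ∧ ∃ so, allowed f (j - 1) so s ∧ e = EmidO f (j - 1) so s))) := by
  obtain ⟨k, hk1, hk2, hsh⟩ := (mem_edges_iff d f e).1 he
  rcases hc with h | h
  · -- pt f j s = e.1
    rcases hsh with rfl | rfl | rfl | rfl
    · -- e = S f k, base pos f k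
      rw [S_base] at h
      obtain ⟨hk, hs⟩ := pt_eq_pos h1 hk1 h
      subst hk; subst hs
      left
      refine ⟨by rw [S_base, ← h], Or.inr ⟨by omega, true, ?_, ?_⟩⟩
      · rcases hf : f j <;> simp [allowed, hf]
      · rcases hf : f j <;> simp [EmidO, hf]
        -- f j = true : EmidO j false true = N f j = S f (j+1)
        simp [N, S, pos_succ f j h1, hf, Apt]
    · -- e = N f k, base Apt f k
      rw [N_base] at h
      obtain ⟨hk, hs⟩ := pt_eq_Apt h1 hk1 h
      subst hk; subst hs
      left
      refine ⟨by rw [N_base, ← h], ?_⟩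
      rcases Nat.eq_or_lt_of_le hk2 with rfl | hlt
      · exact Or.inl ⟨rfl, by simp [ElastO]⟩
      · refine Or.inr ⟨hlt, if f j then true else false, ?_, ?_⟩
        · rcases hf : f j <;> simp [allowed, hf]
        · rcases hf : f j <;> simp [EmidO, hf]
    · -- e = W f k, base pos f k
      rw [W_base] at h
      obtain ⟨hk, hs⟩ := pt_eq_pos h1 hk1 h
      subst hk; subst hs
      left
      refine ⟨by rw [W_base, ← h], Or.inr ⟨by omega, false, ?_, ?_⟩⟩
      · rcases hf : f j <;> simp [allowed, hf]
      · rcases hf : f j <;> simp [EmidO, hf]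
        -- f j = false : EmidO j true false = Ed f j = W f (j+1)
        simp [Ed, W, pos_succ f j h1, hf, Bpt]
    · -- e = Ed f k, base Bpt f k
      rw [Ed_base] at h
      obtain ⟨hk, hs⟩ := pt_eq_Bpt h1 hk1 h
      subst hk; subst hs
      left
      refine ⟨by rw [Ed_base, ← h], ?_⟩
      rcases Nat.eq_or_lt_of_le hk2 with rfl | hlt
      · exact Or.inl ⟨rfl, by simp [ElastO]⟩
      · refine Or.inr ⟨hlt, if f j then true else false, ?_, ?_⟩
        · rcases hf : f j <;> simp [allowed, hf]
        · rcases hf : f j <;> simp [EmidO, hf]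
  · -- pt f j s = ept e
    rcases hsh with rfl | rfl | rfl | rfl
    · -- e = S f k, ept Bpt f k
      rw [S_ept] at h
      obtain ⟨hk, hs⟩ := pt_eq_Bpt h1 hk1 h
      subst hk; subst hs
      right
      refine ⟨by rw [S_ept, ← h], ?_⟩
      rcases Nat.eq_or_lt_of_le h1 with h1' | h1'
      · exact Or.inl ⟨h1'.symm, by rw [← h1']; simp [E0]⟩
      · refine Or.inr ⟨by omega, !(f (j - 1)), ?_, ?_⟩
        · rcases hf : f (j - 1) <;> simp [allowed, hf]
        · rcases hf : f (j - 1) <;> simp [EmidO, hf]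
          · -- f (j-1) = false: EmidO (j-1) true true = S f j
            rw [show j - 1 + 1 = j by omega]
          · -- f (j-1) = true: EmidO (j-1) false true = N f (j-1) = S f j
            have := pos_succ f (j - 1) (by omega)
            rw [show j - 1 + 1 = j by omega] at this
            simp [N, S, this, hf, Apt]
    · -- e = N f k, ept pos f k + (1,1)
      rw [N_ept] at h
      obtain ⟨hk, hs⟩ := pt_eq_diag h1 hk1 h
      right
      refine ⟨by rw [N_ept, ← h], Or.inr ⟨by omega, false, ?_, ?_⟩⟩
      · rcases hf : f (j - 1) <;> simp_all [allowed, hf] <;> omega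
      · have hkj : k = j - 1 := by omega
        subst hkj
        rcases hf : f (j - 1) <;> simp [EmidO, hf, hs]
    · -- e = W f k, ept Apt f k
      rw [W_ept] at h
      obtain ⟨hk, hs⟩ := pt_eq_Apt h1 hk1 h
      subst hk; subst hs
      right
      refine ⟨by rw [W_ept, ← h], ?_⟩
      rcases Nat.eq_or_lt_of_le h1 with h1' | h1'
      · exact Or.inl ⟨h1'.symm, by rw [← h1']; simp [E0]⟩
      · refine Or.inr ⟨by omega, !(f (j - 1)), ?_, ?_⟩
        · rcases hf : f (j - 1) <;> simp [allowed, hf]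
        · rcases hf : f (j - 1) <;> simp [EmidO, hf]
          · -- f (j-1) = false : EmidO (j-1) true false = Ed f (j-1) = W f j
            have := pos_succ f (j - 1) (by omega)
            rw [show j - 1 + 1 = j by omega] at this
            simp [Ed, W, this, hf, Bpt]
          · -- f (j-1) = true : EmidO (j-1) false false = W f j
            rw [show j - 1 + 1 = j by omega]
    · -- e = Ed f k, ept pos f k + (1,1)
      rw [Ed_ept] at h
      obtain ⟨hk, hs⟩ := pt_eq_diag h1 hk1 h
      right
      refine ⟨by rw [Ed_ept, ← h], Or.inr ⟨by omega, true, ?_, ?_⟩⟩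
      · rcases hf : f (j - 1) <;> simp_all [allowed, hf] <;> omega
      · have hkj : k = j - 1 := by omega
        subst hkj
        rcases hf : f (j - 1) <;> simp [EmidO, hf, hs]

end Aux5


section Aux6

variable {d : ℕ} {f : ℕ → Bool}

/-- Vertex `pt f j s` is covered from below. -/
def dn (P : Finset Edge) (f : ℕ → Bool) (j : ℕ) (s : Bool) : Prop :=
  ∃ e ∈ P, ept e = pt f j s

/-- Vertex `pt f j s` is covered from above. -/
def upE (P : Finset Edge) (f : ℕ → Bool) (j : ℕ) (s : Bool) : Prop :=
  ∃ e ∈ P, e.1 = pt f j s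

variable {P : Finset Edge}

lemma exactly_one (hd : 1 ≤ d) (hP : IsPerfectMatching d f P) (j : ℕ) (s : Bool)
    (h1 : 1 ≤ j) (h2 : j ≤ d) :
    (dn P f j s ∨ upE P f j s) ∧ ¬(dn P f j s ∧ upE P f j s) := by
  obtain ⟨g, ⟨hgP, hgcov⟩, hguniq⟩ := hP.2 (pt f j s) (pt_mem_verts d f j s h1 h2)
  constructor
  · rcases hgcov with h | h
    · exact Or.inr ⟨g, hgP, h.symm⟩
    · exact Or.inl ⟨g, hgP, h.symm⟩
  · rintro ⟨⟨e1, he1, hee1⟩, ⟨e2, he2, hee2⟩⟩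
    have h1' := hguniq e1 ⟨he1, Or.inr hee1.symm⟩
    have h2' := hguniq e2 ⟨he2, Or.inl hee2.symm⟩
    rw [← h2'] at h1'
    subst h1'
    exact ept_ne e1 (by rw [hee1, hee2])

lemma dn_shape (hP : IsPerfectMatching d f P) {j : ℕ} {s : Bool}
    (h1 : 1 ≤ j) (h2 : j ≤ d) (h : dn P f j s) :
    ∃ e ∈ P, ept e = pt f j s ∧ ((j = 1 ∧ e = E0 f s) ∨
      (2 ≤ j ∧ ∃ so, allowed f (j - 1) so s ∧ e = EmidO f (j - 1) so s)) := by
  obtain ⟨e, heP, hee⟩ := h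
  rcases inc e (hP.1 heP) j s h1 h2 (Or.inr hee.symm) with ⟨hb, -⟩ | ⟨-, hcl⟩
  · exact absurd (hee.trans hb.symm) (ept_ne e)
  · exact ⟨e, heP, hee, hcl⟩

lemma upE_shape (hP : IsPerfectMatching d f P) {j : ℕ} {s : Bool}
    (h1 : 1 ≤ j) (h2 : j ≤ d) (h : upE P f j s) :
    ∃ e ∈ P, e.1 = pt f j s ∧ ((j = d ∧ e = ElastO f d s) ∨
      (j < d ∧ ∃ si, allowed f j s si ∧ e = EmidO f j s si)) := by
  obtain ⟨e, heP, hee⟩ := h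
  rcases inc e (hP.1 heP) j s h1 h2 (Or.inl hee.symm) with ⟨-, hcl⟩ | ⟨hb, -⟩
  · exact ⟨e, heP, hee, hcl⟩
  · exact absurd (hb.trans hee.symm) (ept_ne e)

lemma start_dn (hd : 1 ≤ d) (hP : IsPerfectMatching d f P) : ∃ s, E0 f s ∈ P := by
  obtain ⟨g, ⟨hgP, hgcov⟩, -⟩ := hP.2 (0, 0) (origin_mem_verts d f hd)
  rcases inc0 g (hP.1 hgP) hgcov with h | h
  · refine ⟨true, ?_⟩
    have he : E0 f true = S f 1 := by simp [E0]
    rw [he, ← h]; exact hgP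
  · refine ⟨false, ?_⟩
    have he : E0 f false = W f 1 := by simp [E0]
    rw [he, ← h]; exact hgP

lemma uniq_dn (hd : 1 ≤ d) (hP : IsPerfectMatching d f P) {j : ℕ}
    (h1 : 1 ≤ j) (h2 : j ≤ d) (hprev : 2 ≤ j → ∃ s, dn P f (j - 1) s)
    {s s' : Bool} (hs : dn P f j s) (hs' : dn P f j s') : s = s' := by
  obtain ⟨e, heP, hee, hcl⟩ := dn_shape hP h1 h2 hs
  obtain ⟨e', heP', hee', hcl'⟩ := dn_shape hP h1 h2 hs'
  have same : e = e' → s = s' := by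
    intro hq
    rw [hq, hee'] at hee
    exact ((pt_inj f h1 h1 hee).2).symm
  rcases hcl with ⟨hj1, rfl⟩ | ⟨hj2, so, hall, rfl⟩
  · rcases hcl' with ⟨-, rfl⟩ | ⟨hj2', -⟩
    · -- both E0: cover (0,0)
      obtain ⟨g, -, hguniq⟩ := hP.2 (0, 0) (origin_mem_verts d f hd)
      apply same
      rw [hguniq _ ⟨heP, Or.inl (E0_base f s).symm⟩, hguniq _ ⟨heP', Or.inl (E0_base f s').symm⟩]
    · omega
  · rcases hcl' with ⟨hj1', -⟩ | ⟨-, so', hall', rfl⟩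
    · omega
    · by_cases hso : so = so'
      · subst hso
        obtain ⟨g, -, hguniq⟩ := hP.2 (pt f (j - 1) so) (pt_mem_verts d f (j - 1) so (by omega) (by omega))
        apply same
        rw [hguniq _ ⟨heP, Or.inl (EmidO_base f (j - 1) so s (by omega)).symm⟩,
          hguniq _ ⟨heP', Or.inl (EmidO_base f (j - 1) so s' (by omega)).symm⟩]
      · exfalso
        obtain ⟨s0, hs0⟩ := hprev hj2
        have hup : upE P f (j - 1) s0 := by
          rcases Bool.eq_or_eq_not s0 so with hss | hss
          · rw [hss]
            exact ⟨_, heP, EmidO_base f (j - 1) so s (by omega)⟩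
          · have hcalc : ∀ a b c : Bool, ¬ a = b → c = !a → c = b := by decide
            rw [hcalc so so' s0 hso hss]
            exact ⟨_, heP', EmidO_base f (j - 1) so' s' (by omega)⟩
        exact (exactly_one hd hP (j - 1) s0 (by omega) (by omega)).2 ⟨hs0, hup⟩

lemma exists_dn (hd : 1 ≤ d) (hP : IsPerfectMatching d f P) :
    ∀ j, 1 ≤ j → j ≤ d →
      (∃ s, dn P f j s) ∧ (∀ s s', dn P f j s → dn P f j s' → s = s') := by
  intro j hj1
  induction j, hj1 using Nat.le_induction with
  | base =>
    intro h2
    obtain ⟨s, hs⟩ := start_dn hd hP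
    refine ⟨⟨s, _, hs, E0_ept f s⟩, ?_⟩
    intro s s' h h'
    exact uniq_dn hd hP le_rfl h2 (by omega) h h'
  | succ n hn ih =>
    intro h2
    obtain ⟨⟨s, hs⟩, huniq⟩ := ih (by omega)
    have hnup : ¬ dn P f n (!s) := by
      intro hcon
      have := huniq s (!s) hs hcon
      simp at this
    have hup : upE P f n (!s) := by
      rcases (exactly_one hd hP n (!s) (by omega) (by omega)).1 with h | h
      · exact absurd h hnup
      · exact h
    obtain ⟨e, heP, hee, hcl⟩ := upE_shape hP (by omega) (by omega) hup
    rcases hcl with ⟨rfl, -⟩ | ⟨-, si, hall, rfl⟩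
    · omega
    · refine ⟨⟨si, _, heP, EmidO_ept f n _ _ (by omega) hall⟩, ?_⟩
      intro t t' h h'
      exact uniq_dn hd hP (by omega) h2
        (fun _ => ⟨s, by simpa using hs⟩) h h'

/-- Surjectivity: every perfect matching is `Pm u` for a valid `u`. -/
lemma matching_eq_Pm (hd : 1 ≤ d) (hP : IsPerfectMatching d f P) (hPe : P ⊆ edges d f) :
    ∃ u : ℕ → Bool, ValidU d f u ∧ P = Pm d f u := by
  classical
  set u : ℕ → Bool := fun j =>
    if h : 1 ≤ j ∧ j ≤ d then ((exists_dn hd hP j h.1 h.2).1).choose else false with hu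
  have hdnu : ∀ j, 1 ≤ j → j ≤ d → dn P f j (u j) := by
    intro j hj1 hj2
    rw [hu]
    simp only [dif_pos (⟨hj1, hj2⟩ : 1 ≤ j ∧ j ≤ d)]
    exact ((exists_dn hd hP j hj1 hj2).1).choose_spec
  have huniq : ∀ j, 1 ≤ j → j ≤ d → ∀ s, dn P f j s → s = u j := fun j hj1 hj2 s hs =>
    (exists_dn hd hP j hj1 hj2).2 s (u j) hs (hdnu j hj1 hj2)
  have hup : ∀ j, 1 ≤ j → j ≤ d → upE P f j (!(u j)) := by
    intro j hj1 hj2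
    rcases (exactly_one hd hP j (!(u j)) hj1 hj2).1 with h | h
    · have := huniq j hj1 hj2 _ h
      simp at this
    · exact h
  -- climb: get the mid edges with validity
  have hmid : ∀ j, 1 ≤ j → j + 1 ≤ d →
      allowed f j (!(u j)) (u (j + 1)) ∧ EmidO f j (!(u j)) (u (j + 1)) ∈ P := by
    intro j hj1 hj2
    obtain ⟨e, heP, hee, hcl⟩ := upE_shape hP hj1 (by omega) (hup j hj1 (by omega))
    rcases hcl with ⟨rfl, -⟩ | ⟨-, si, hall, rfl⟩
    · omega
    · have hsi : si = u (j + 1) := by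
        apply huniq (j + 1) (by omega) hj2
        exact ⟨_, heP, EmidO_ept f j _ _ hj1 hall⟩
      rw [← hsi]
      exact ⟨hall, heP⟩
  have hvalid : ValidU d f u := fun j hj1 hj2 => (hmid j hj1 hj2).1
  refine ⟨u, hvalid, ?_⟩
  -- first: Pm u ⊆ P
  have hPmP : Pm d f u ⊆ P := by
    intro e he
    obtain ⟨k, hk, rfl⟩ := (mem_Pm_iff u e).1 he
    rcases Nat.eq_zero_or_pos k with rfl | hk1
    · -- E0 (u 1)
      obtain ⟨e', heP', hee', hcl'⟩ := dn_shape hP le_rfl hd (hdnu 1 le_rfl hd)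
      rcases hcl' with ⟨-, rfl⟩ | ⟨h2, -⟩
      · simpa [eAt] using heP'
      · omega
    · rcases Nat.eq_or_lt_of_le (by omega : k ≤ d) with rfl | hlt
      · -- ElastO (!(u d))
        obtain ⟨e', heP', hee', hcl'⟩ := upE_shape hP hd le_rfl (hup k hd le_rfl)
        rcases hcl' with ⟨-, rfl⟩ | ⟨hlt', -⟩
        · have hk0 : ¬ k = 0 := by omega
          simpa [eAt, hk0] using heP'
        · omega
      · have := (hmid k hk1 (by omega)).2
        simp only [eAt, if_neg (by omega : ¬ k = 0), if_neg (by omega : ¬ k = d)]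
        exact this
  -- then: P ⊆ Pm u
  apply Finset.Subset.antisymm _ hPmP
  intro e heP
  have hbv : e.1 ∈ verts d f := by
    obtain ⟨k, hk1, hk2, hsh⟩ := (mem_edges_iff d f e).1 (hPe heP)
    rcases hsh with rfl | rfl | rfl | rfl
    · rw [S_base]
      simp only [verts, Finset.mem_biUnion, Finset.mem_Icc]
      exact ⟨k, ⟨hk1, hk2⟩, by simp⟩
    · rw [N_base]
      exact pt_mem_verts d f k false hk1 hk2
    · rw [W_base]
      simp only [verts, Finset.mem_biUnion, Finset.mem_Icc]
      exact ⟨k, ⟨hk1, hk2⟩, by simp⟩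
    · rw [Ed_base]
      exact pt_mem_verts d f k true hk1 hk2
  obtain ⟨g, ⟨hgP, hgcov⟩, hguniq⟩ := hP.2 e.1 hbv
  obtain ⟨g', ⟨hgP', hgcov'⟩, -⟩ := Pm_cover hd u hvalid e.1 hbv
  have h1 := hguniq e ⟨heP, Or.inl rfl⟩
  have h2 := hguniq g' ⟨hPmP hgP', hgcov'⟩
  rw [h1, ← h2]
  exact hgP'

end Aux6


section Aux7

variable {K : Type*} [Field K]
variable {d : ℕ} {f : ℕ → Bool}

lemma lvl_top (hd : 1 ≤ d) : lvl (pos f d + (1, 1)) = (d : ℤ) + 1 := by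
  rw [pos_diag_eq_pt d hd, lvl_pt f (d + 1) _ (by omega)]
  push_cast
  ring

lemma dn_Pm_iff (hd : 1 ≤ d) (u : ℕ → Bool) (hu : ValidU d f u) (j : ℕ) (s : Bool)
    (h1 : 1 ≤ j) (h2 : j ≤ d) : dn (Pm d f u) f j s ↔ s = u j := by
  constructor
  · rintro ⟨e, he, hee⟩
    obtain ⟨k, hk, rfl⟩ := (mem_Pm_iff u e).1 he
    rw [eAt_ept hd u hu k hk] at hee
    rcases Nat.eq_or_lt_of_le hk with rfl | hlt
    · exfalso
      rw [if_pos rfl] at hee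
      have h3 := lvl_top (f := f) hd
      rw [hee, lvl_pt f j s h1] at h3
      omega
    · rw [if_neg (by omega)] at hee
      obtain ⟨hjk, hss⟩ := pt_inj f (by omega) h1 hee
      rw [← hss, hjk]
  · rintro rfl
    refine ⟨eAt d f u (j - 1), (mem_Pm_iff u _).2 ⟨j - 1, by omega, rfl⟩, ?_⟩
    rw [eAt_ept hd u hu (j - 1) (by omega), if_neg (by omega), show j - 1 + 1 = j by omega]

lemma Pm_inj (hd : 1 ≤ d) {u u' : ℕ → Bool} (hu : ValidU d f u) (hu' : ValidU d f u')
    (h : Pm d f u = Pm d f u') : ∀ j, 1 ≤ j → j ≤ d → u j = u' j := by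
  intro j h1 h2
  have := (dn_Pm_iff hd u hu j (u j) h1 h2).2 rfl
  rw [h] at this
  exact (dn_Pm_iff hd u' hu' j (u j) h1 h2).1 this

lemma eAt_congr {u u' : ℕ → Bool} (h : ∀ j, 1 ≤ j → j ≤ d → u j = u' j)
    (k : ℕ) (hk : k ≤ d) (hd : 1 ≤ d) : eAt d f u k = eAt d f u' k := by
  rcases Nat.eq_zero_or_pos k with rfl | hk1
  · simp [eAt, h 1 le_rfl hd]
  · rcases Nat.eq_or_lt_of_le hk with rfl | hlt
    · have hk0 : ¬ k = 0 := by omega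
      simp [eAt, hk0, h k hd le_rfl]
    · have hk0 : ¬ k = 0 := by omega
      have hkd : ¬ k = d := by omega
      simp only [eAt, if_neg hk0, if_neg hkd, h k hk1 (by omega),
        h (k + 1) (by omega) (by omega)]

lemma Pm_congr {u u' : ℕ → Bool} (hd : 1 ≤ d) (h : ∀ j, 1 ≤ j → j ≤ d → u j = u' j) :
    Pm d f u = Pm d f u' := by
  unfold Pm
  apply Finset.image_congr
  intro k hk
  simp only [Finset.mem_coe, Finset.mem_range] at hk
  exact eAt_congr h k (by omega) hd

lemma ValidU_congr {u u' : ℕ → Bool} (h : ∀ j, 1 ≤ j → j ≤ d → u j = u' j)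
    (hu : ValidU d f u) : ValidU d f u' := by
  intro j h1 h2
  rw [← h j h1 (by omega), ← h (j + 1) (by omega) h2]
  exact hu j h1 h2

lemma S1_mem_Pm_iff (hd : 1 ≤ d) (u : ℕ → Bool) : S f 1 ∈ Pm d f u ↔ u 1 = true := by
  constructor
  · intro h
    obtain ⟨k, hk, hke⟩ := (mem_Pm_iff u _).1 h
    have hb := lvl_eAt_base (f := f) hd u k hk
    rw [← hke, S_base, lvl_pos f 1 le_rfl] at hb
    have : k = 0 := by omega
    subst this
    rcases hs : u 1
    · exfalso
      simp only [eAt, if_pos rfl, E0, hs] at hke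
      exact Bool.noConfusion (congrArg Prod.snd hke)
    · rfl
  · intro hs
    refine (mem_Pm_iff u _).2 ⟨0, by omega, ?_⟩
    simp [eAt, E0, hs]

lemma Elast_mem_Pm_iff (hd : 1 ≤ d) (u : ℕ → Bool) (s : Bool) :
    ElastO f d s ∈ Pm d f u ↔ s = !(u d) := by
  constructor
  · intro h
    obtain ⟨k, hk, hke⟩ := (mem_Pm_iff u _).1 h
    have hb := lvl_eAt_base (f := f) hd u k hk
    rw [← hke, ElastO_base, lvl_pt f d s hd] at hb
    have : k = d := by omega
    subst this
    have hk0 : ¬ k = 0 := by omega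
    simp only [eAt, if_neg hk0, if_pos rfl] at hke
    rcases hs : u k <;> rcases hs' : s <;> simp [hs, hs'] at hke ⊢ <;>
      · rw [ElastO, ElastO] at hke
        simp [hs, hs'] at hke
        exact Bool.noConfusion (congrArg Prod.snd hke)
  · rintro rfl
    refine (mem_Pm_iff u _).2 ⟨d, le_rfl, ?_⟩
    have hk0 : ¬ d = 0 := by omega
    simp [eAt, hk0]

lemma Ed_mem_Pm_iff (hd : 1 ≤ d) (u : ℕ → Bool) : Ed f d ∈ Pm d f u ↔ u d = false := by
  have h := Elast_mem_Pm_iff (f := f) hd u true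
  rw [ElastO, if_pos rfl] at h
  rw [h]
  rcases hs : u d <;> simp

lemma N_mem_Pm_iff (hd : 1 ≤ d) (u : ℕ → Bool) : N f d ∈ Pm d f u ↔ u d = true := by
  have h := Elast_mem_Pm_iff (f := f) hd u false
  rw [ElastO, if_neg (by simp)] at h
  rw [h]
  rcases hs : u d <;> simp

/-- The `x`-weight of `Pm u` as an explicit product. -/
lemma xwt_Pm (hd : 1 ≤ d) (u : ℕ → Bool) (wt : Edge → K) :
    xwt wt (Pm d f u) =
      wt (E0 f (u 1)) * wt (ElastO f d (!(u d))) *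
        ∏ k ∈ Finset.Icc 1 (d - 1), wt (EmidO f k (!(u k)) (u (k + 1))) := by
  have hinj : ∀ x ∈ Finset.range (d + 1), ∀ y ∈ Finset.range (d + 1),
      eAt d f u x = eAt d f u y → x = y := by
    intro x hx y hy hxy
    exact eAt_inj hd u (by simpa using Nat.lt_succ_iff.mp (Finset.mem_range.mp hx))
      (by simpa using Nat.lt_succ_iff.mp (Finset.mem_range.mp hy)) hxy
  rw [xwt, Pm, Finset.prod_image hinj]
  have hsplit : Finset.range (d + 1) = insert 0 (insert d (Finset.Icc 1 (d - 1))) := by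
    ext x
    simp only [Finset.mem_range, Finset.mem_insert, Finset.mem_Icc]
    omega
  rw [hsplit, Finset.prod_insert (by simp only [Finset.mem_insert, Finset.mem_Icc]; omega),
    Finset.prod_insert (by simp only [Finset.mem_Icc]; omega)]
  have h0 : eAt d f u 0 = E0 f (u 1) := by simp [eAt]
  have hdd : eAt d f u d = ElastO f d (!(u d)) := by
    have hk0 : ¬ d = 0 := by omega
    simp [eAt, hk0]
  rw [h0, hdd]
  rw [Finset.prod_congr rfl fun k hk => ?_]
  · ring
  · simp only [Finset.mem_Icc] at hk
    simp only [eAt, if_neg (by omega : ¬ k = 0), if_neg (by omega : ¬ k = d)]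

/-- The `y`-weight of `Pm u` as an explicit product. -/
lemma ywt_Pm (hd : 1 ≤ d) (u : ℕ → Bool) (hu : ValidU d f u) (ε : ℕ → ℤ) (y : ℕ → K) :
    ywt d f ε y (Pm d f u) =
      ∏ j ∈ Finset.Icc 1 d, (if
        ((Odd j ∧ ((ε j = 1 ∧ u j = false) ∨ (ε j = -1 ∧ u j = true))) ∨
         (Even j ∧ ((ε j = 1 ∧ u j = true) ∨ (ε j = -1 ∧ u j = false)))) then y j else 1) := by
  rw [ywt, Finset.prod_filter]
  apply Finset.prod_congr rfl
  intro j hj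
  simp only [Finset.mem_Icc] at hj
  by_cases h : EpsOriented d f ε (Pm d f u) j
  · rw [if_pos h, if_pos ((epsOriented_iff hd u hu ε j hj.1 hj.2).1 h)]
  · rw [if_neg h, if_neg (fun hc => h ((epsOriented_iff hd u hu ε j hj.1 hj.2).2 hc))]

end Aux7


section AuxAlg

variable {K : Type*} [Field K]

/-- The `y`-contribution of tile `j` in state `s`. -/
def yfacK (ε : ℕ → ℤ) (y : ℕ → K) (j : ℕ) (s : Bool) : K :=
  if ((Odd j ∧ ((ε j = 1 ∧ s = false) ∨ (ε j = -1 ∧ s = true))) ∨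
      (Even j ∧ ((ε j = 1 ∧ s = true) ∨ (ε j = -1 ∧ s = false)))) then y j else 1

/-- The transition weight from in-state `s` at tile `j` to in-state `t` at tile `j+1`. -/
def transK (f : ℕ → Bool) (xi xA : ℕ → K) (j : ℕ) (s t : Bool) : K :=
  if f j then (if s then (if t then xA j else xi j) else (if t then xi (j + 1) else 0))
  else (if s then (if t then 0 else xi (j + 1)) else (if t then xi j else xA j))

/-- Index convention: state `s` at tile `j` has matrix index `0` iff `s` matches
the parity of `j`. -/
def idxF (j : ℕ) (s : Bool) : Fin 2 := if s = decide (j % 2 = 1) then 0 else 1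

/-- Diagonal scaling factor. -/
def bfacK (xi : ℕ → K) (j : ℕ) (s : Bool) : K := if s = decide (j % 2 = 1) then 1 else xi j

lemma transK_not_allowed {f : ℕ → Bool} (xi xA : ℕ → K) (j : ℕ) (s t : Bool)
    (h : ¬ allowed f j (!s) t) : transK f xi xA j s t = 0 := by
  rcases hf : f j <;> rcases s <;> rcases t <;> simp_all [allowed, transK, hf]

lemma wt_EmidO {f : ℕ → Bool} (wt : Edge → K) (xi xA : ℕ → K) (j : ℕ) (s t : Bool)
    (hall : allowed f j (!s) t)
    (hsh : if f j then
        wt (N f j) = xA j ∧ wt (Ed f j) = xi (j + 1) ∧ wt (W f (j + 1)) = xi j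
      else
        wt (Ed f j) = xA j ∧ wt (N f j) = xi (j + 1) ∧ wt (S f (j + 1)) = xi j) :
    wt (EmidO f j (!s) t) = transK f xi xA j s t := by
  rcases hf : f j <;> rw [hf] at hsh <;> rcases s <;> rcases t <;>
    simp_all [allowed, EmidO, transK, hf]

lemma kind_succ (f : ℕ → Bool) (j : ℕ) (hj : 1 ≤ j) :
    kind f (j + 1) = if f j = f (j + 1) then !(kind f j) else kind f j := by
  obtain ⟨m, rfl⟩ := Nat.exists_eq_add_of_le' hj
  rfl

lemma kind_eq (f : ℕ → Bool) : ∀ j, 1 ≤ j → kind f j = (f j == decide (j % 2 = 1)) := by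
  intro j hj
  induction j, hj using Nat.le_induction with
  | base => simp [kind]
  | succ n hn ih =>
    rw [kind_succ f n hn, ih]
    rcases Nat.mod_two_eq_zero_or_one n with hm | hm
    · have h1 : (n + 1) % 2 = 1 := by omega
      rcases hf1 : f n <;> rcases hf2 : f (n + 1) <;> simp [hm, h1, hf1, hf2]
    · have h1 : (n + 1) % 2 = 0 := by omega
      rcases hf1 : f n <;> rcases hf2 : f (n + 1) <;> simp [hm, h1, hf1, hf2]

/-- The local matrix identity (B0). -/
lemma tileMat_entry (f : ℕ → Bool) (ε : ℕ → ℤ) (xi xA y : ℕ → K) (j : ℕ) (s t : Bool)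
    (h1 : 1 ≤ j) (hxj : xi j ≠ 0) (hxj1 : xi (j + 1) ≠ 0) (hej : ε j = 1 ∨ ε j = -1) :
    tileMat f ε xi xA y j (idxF (j + 1) t) (idxF j s) * (xi j * bfacK xi (j + 1) t) =
      transK f xi xA j s t * yfacK ε y j s * bfacK xi j s := by
  have hk := kind_eq f j h1
  rcases Nat.mod_two_eq_zero_or_one j with hm | hm
  · -- j even
    have hodd : ¬ Odd j := by simp [Nat.odd_iff, hm]
    have heven : Even j := by simpa [Nat.even_iff] using hm
    have h2 : (j + 1) % 2 = 1 := by omega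
    rcases hej with he | he <;> rcases hf : f j <;> rcases s <;> rcases t <;>
      · rw [hf] at hk
        simp only [tileMat, hk, hm, h2, idxF, bfacK, yfacK, transK, he, hf,
          hodd, heven] at *
        norm_num [Matrix.cons_val_zero, Matrix.cons_val_one, Matrix.head_cons,
          Matrix.head_fin_const]
        try field_simp
        try ring
  · -- j odd
    have hodd : Odd j := by simpa [Nat.odd_iff] using hm
    have heven : ¬ Even j := by simp [Nat.even_iff, hm]
    have h2 : (j + 1) % 2 = 0 := by omega
    rcases hej with he | he <;> rcases hf : f j <;> rcases s <;> rcases t <;>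
      · rw [hf] at hk
        simp only [tileMat, hk, hm, h2, idxF, bfacK, yfacK, transK, he, hf,
          hodd, heven] at *
        norm_num [Matrix.cons_val_zero, Matrix.cons_val_one, Matrix.head_cons,
          Matrix.head_fin_const]
        try field_simp
        try ring

end AuxAlg


section AuxAlg2

variable {K : Type*} [Field K]

/-- Weighted path sum from tile `1` (state `t`) to tile `n` (state `s`). -/
def Gfun (f : ℕ → Bool) (ε : ℕ → ℤ) (xi xA y : ℕ → K) : ℕ → Bool → Bool → K
  | 0, t, s => if t = s then 1 else 0
  | 1, t, s => if t = s then 1 else 0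
  | n + 2, t, s =>
      Gfun f ε xi xA y (n + 1) t true * yfacK ε y (n + 1) true * transK f xi xA (n + 1) true s +
      Gfun f ε xi xA y (n + 1) t false * yfacK ε y (n + 1) false * transK f xi xA (n + 1) false s

lemma Gfun_succ (f : ℕ → Bool) (ε : ℕ → ℤ) (xi xA y : ℕ → K) (n : ℕ) (hn : 1 ≤ n)
    (t s : Bool) :
    Gfun f ε xi xA y (n + 1) t s =
      Gfun f ε xi xA y n t true * yfacK ε y n true * transK f xi xA n true s +
      Gfun f ε xi xA y n t false * yfacK ε y n false * transK f xi xA n false s := by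
  obtain ⟨m, rfl⟩ := Nat.exists_eq_add_of_le' hn
  rfl

lemma Mmat_succ (f : ℕ → Bool) (ε : ℕ → ℤ) (xi xA y : ℕ → K) (n : ℕ) (hn : 1 ≤ n) :
    Mmat f ε xi xA y (n + 1) = tileMat f ε xi xA y n * Mmat f ε xi xA y n := by
  obtain ⟨m, rfl⟩ := Nat.exists_eq_add_of_le' hn
  rfl

/-- Scaling product. -/
def Efac (xi : ℕ → K) (n : ℕ) : K := ∏ k ∈ Finset.Icc 1 (n - 1), xi k

lemma Efac_succ (xi : ℕ → K) (n : ℕ) (hn : 1 ≤ n) :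
    Efac xi (n + 1) = Efac xi n * xi n := by
  unfold Efac
  rw [show n + 1 - 1 = (n - 1) + 1 by omega, Finset.prod_Icc_succ_top (by omega),
    show n - 1 + 1 = n by omega]

lemma idxF_exhaust (n : ℕ) (g : Fin 2 → K) :
    g 0 + g 1 = g (idxF n true) + g (idxF n false) := by
  unfold idxF
  rcases h : decide (n % 2 = 1) <;> simp [h, add_comm]

/-- B1: the matrix product computes weighted path sums. -/
lemma Mmat_entry (f : ℕ → Bool) (ε : ℕ → ℤ) (xi xA y : ℕ → K) (d : ℕ)
    (hxi : ∀ j, 1 ≤ j → j ≤ d → xi j ≠ 0) (hε : ∀ j, 1 ≤ j → j ≤ d → ε j = 1 ∨ ε j = -1) :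
    ∀ n, 1 ≤ n → n ≤ d → ∀ t s : Bool,
      Mmat f ε xi xA y n (idxF n s) (idxF 1 t) * (Efac xi n * bfacK xi n s) =
        Gfun f ε xi xA y n t s * bfacK xi 1 t := by
  intro n hn
  induction n, hn using Nat.le_induction with
  | base =>
    intro _ t s
    have h1 : Efac xi 1 = 1 := by simp [Efac]
    rw [Mmat, h1]
    rcases t <;> rcases s <;>
      simp [Matrix.one_apply, idxF, bfacK, Gfun] <;>
      rcases h : decide (1 % 2 = 1) <;> simp_all
  | succ n hn ih =>
    intro hnd t s
    rw [Mmat_succ f ε xi xA y n hn, Matrix.mul_apply, Fin.sum_univ_two,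
      idxF_exhaust n (fun k => tileMat f ε xi xA y n (idxF (n + 1) s) k *
        Mmat f ε xi xA y n k (idxF 1 t)),
      Efac_succ xi n hn, Gfun_succ f ε xi xA y n hn]
    have hB0 : ∀ r : Bool,
        tileMat f ε xi xA y n (idxF (n + 1) s) (idxF n r) * (xi n * bfacK xi (n + 1) s) =
          transK f xi xA n r s * yfacK ε y n r * bfacK xi n r :=
      fun r => tileMat_entry f ε xi xA y n r s hn (hxi n hn (by omega))
        (hxi (n + 1) (by omega) hnd) (hε n hn (by omega))
    have hIH : ∀ r : Bool,
        Mmat f ε xi xA y n (idxF n r) (idxF 1 t) * (Efac xi n * bfacK xi n r) =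
          Gfun f ε xi xA y n t r * bfacK xi 1 t := fun r => ih (by omega) t r
    have expand : ∀ r : Bool,
        tileMat f ε xi xA y n (idxF (n + 1) s) (idxF n r) *
            Mmat f ε xi xA y n (idxF n r) (idxF 1 t) *
            (Efac xi n * xi n * bfacK xi (n + 1) s) =
          Gfun f ε xi xA y n t r * yfacK ε y n r * transK f xi xA n r s * bfacK xi 1 t := by
      intro r
      have e1 := hB0 r
      have e2 := hIH r
      calc tileMat f ε xi xA y n (idxF (n + 1) s) (idxF n r) *
            Mmat f ε xi xA y n (idxF n r) (idxF 1 t) *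
            (Efac xi n * xi n * bfacK xi (n + 1) s)
          = (tileMat f ε xi xA y n (idxF (n + 1) s) (idxF n r) * (xi n * bfacK xi (n + 1) s)) *
            Mmat f ε xi xA y n (idxF n r) (idxF 1 t) * Efac xi n := by ring
        _ = (transK f xi xA n r s * yfacK ε y n r * bfacK xi n r) *
            Mmat f ε xi xA y n (idxF n r) (idxF 1 t) * Efac xi n := by rw [e1]
        _ = (transK f xi xA n r s * yfacK ε y n r) *
            (Mmat f ε xi xA y n (idxF n r) (idxF 1 t) * (Efac xi n * bfacK xi n r)) := by ring
        _ = (transK f xi xA n r s * yfacK ε y n r) *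
            (Gfun f ε xi xA y n t r * bfacK xi 1 t) := by rw [e2]
        _ = Gfun f ε xi xA y n t r * yfacK ε y n r * transK f xi xA n r s * bfacK xi 1 t := by
            ring
    calc (tileMat f ε xi xA y n (idxF (n + 1) s) (idxF n true) *
            Mmat f ε xi xA y n (idxF n true) (idxF 1 t) +
          tileMat f ε xi xA y n (idxF (n + 1) s) (idxF n false) *
            Mmat f ε xi xA y n (idxF n false) (idxF 1 t)) *
          (Efac xi n * xi n * bfacK xi (n + 1) s)
        = tileMat f ε xi xA y n (idxF (n + 1) s) (idxF n true) *
            Mmat f ε xi xA y n (idxF n true) (idxF 1 t) *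
            (Efac xi n * xi n * bfacK xi (n + 1) s) +
          tileMat f ε xi xA y n (idxF (n + 1) s) (idxF n false) *
            Mmat f ε xi xA y n (idxF n false) (idxF 1 t) *
            (Efac xi n * xi n * bfacK xi (n + 1) s) := by ring
      _ = Gfun f ε xi xA y n t true * yfacK ε y n true * transK f xi xA n true s *
            bfacK xi 1 t +
          Gfun f ε xi xA y n t false * yfacK ε y n false * transK f xi xA n false s *
            bfacK xi 1 t := by rw [expand true, expand false]
      _ = _ := by ring

/-- Truncation of a `Fin n`-tuple to `ℕ → Bool`, supported on `[1, n]`. -/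
def toU (n : ℕ) (v : Fin n → Bool) : ℕ → Bool :=
  fun j => if h : 1 ≤ j ∧ j ≤ n then v ⟨j - 1, by omega⟩ else false

/-- Path product of an orientation sequence (transition and `y` weights). -/
def pathProd (f : ℕ → Bool) (ε : ℕ → ℤ) (xi xA y : ℕ → K) (n : ℕ) (u : ℕ → Bool) : K :=
  ∏ j ∈ Finset.Icc 1 (n - 1), (transK f xi xA j (u j) (u (j + 1)) * yfacK ε y j (u j))

lemma toU_snoc_le (n : ℕ) (v : Fin n → Bool) (b : Bool) (j : ℕ) (h1 : 1 ≤ j) (h2 : j ≤ n) :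
    toU (n + 1) (Fin.snoc v b) j = toU n v j := by
  unfold toU
  rw [dif_pos ⟨h1, by omega⟩, dif_pos ⟨h1, h2⟩]
  have hlt : j - 1 < n := by omega
  simp [Fin.snoc, hlt]

lemma toU_snoc_last (n : ℕ) (v : Fin n → Bool) (b : Bool) :
    toU (n + 1) (Fin.snoc v b) (n + 1) = b := by
  unfold toU
  rw [dif_pos ⟨by omega, le_rfl⟩]
  simp [Fin.snoc]

/-- B3: sum over orientation sequences with fixed endpoints equals `Gfun`. -/
lemma sum_paths (f : ℕ → Bool) (ε : ℕ → ℤ) (xi xA y : ℕ → K) :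
    ∀ n, 1 ≤ n → ∀ t s : Bool,
      (∑ v : Fin n → Bool, if toU n v 1 = t ∧ toU n v n = s
          then pathProd f ε xi xA y n (toU n v) else 0) =
        Gfun f ε xi xA y n t s := by
  intro n hn
  induction n, hn using Nat.le_induction with
  | base =>
    intro t s
    rw [show Gfun f ε xi xA y 1 t s = if t = s then 1 else 0 from rfl]
    rw [← Equiv.sum_comp (Equiv.funUnique (Fin 1) Bool).symm, Fintype.sum_bool]
    have hval : ∀ b : Bool, toU 1 ((Equiv.funUnique (Fin 1) Bool).symm b) 1 = b := by
      intro b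
      simp [toU, Equiv.funUnique]
    have hpp : ∀ b : Bool, pathProd f ε xi xA y 1 (toU 1 ((Equiv.funUnique (Fin 1) Bool).symm b)) = 1 := by
      intro b
      simp [pathProd, Finset.Icc_eq_empty (by omega : ¬ (1:ℕ) ≤ 0)]
    rw [hval, hval, hpp, hpp]
    rcases t <;> rcases s <;> simp
  | succ n hn ih =>
    intro t s
    rw [← Equiv.sum_comp (Fin.snocEquiv (fun _ : Fin (n + 1) => Bool)), Fintype.sum_prod_type]
    have key : ∀ (b : Bool) (v : Fin n → Bool),
        (if toU (n + 1) ((Fin.snocEquiv (fun _ => Bool)) (b, v)) 1 = t ∧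
            toU (n + 1) ((Fin.snocEquiv (fun _ => Bool)) (b, v)) (n + 1) = s
          then pathProd f ε xi xA y (n + 1) (toU (n + 1) ((Fin.snocEquiv (fun _ => Bool)) (b, v)))
          else 0) =
        (if b = s then 1 else 0) *
          ((if toU n v 1 = t ∧ toU n v n = true then pathProd f ε xi xA y n (toU n v) else 0) *
              (yfacK ε y n true * transK f xi xA n true s) +
           (if toU n v 1 = t ∧ toU n v n = false then pathProd f ε xi xA y n (toU n v) else 0) *
              (yfacK ε y n false * transK f xi xA n false s)) := by
      intro b v
      have hsnoc : (Fin.snocEquiv (fun _ : Fin (n + 1) => Bool)) (b, v) = Fin.snoc v b := rfl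
      rw [hsnoc]
      have h1 : toU (n + 1) (Fin.snoc v b) 1 = toU n v 1 := toU_snoc_le n v b 1 le_rfl hn
      have h2 : toU (n + 1) (Fin.snoc v b) (n + 1) = b := toU_snoc_last n v b
      have hppsplit : pathProd f ε xi xA y (n + 1) (toU (n + 1) (Fin.snoc v b)) =
          pathProd f ε xi xA y n (toU n v) *
            (transK f xi xA n (toU n v n) b * yfacK ε y n (toU n v n)) := by
        unfold pathProd
        rw [show n + 1 - 1 = (n - 1) + 1 by omega, Finset.prod_Icc_succ_top (by omega),
          show n - 1 + 1 = n by omega]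
        congr 1
        · apply Finset.prod_congr rfl
          intro j hj
          simp only [Finset.mem_Icc] at hj
          rw [toU_snoc_le n v b j hj.1 (by omega), toU_snoc_le n v b (j + 1) (by omega) (by omega)]
        · rw [toU_snoc_le n v b n hn le_rfl, toU_snoc_last n v b]
      rw [h1, h2, hppsplit]
      by_cases hA : toU n v 1 = t
      · rcases hb : b <;> rcases hr : toU n v n <;> rcases hs : s <;>
          simp only [hA, hb, hr, hs, and_self, and_true, and_false, true_and, false_and,
            if_true, if_false, Bool.true_eq_false, Bool.false_eq_true, eq_self_iff_true,
            one_mul, zero_mul, mul_zero, add_zero, zero_add, ite_true, ite_false] <;>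
          first | rfl | ring | simp
      · simp [hA]
    calc (∑ b : Bool, ∑ v : Fin n → Bool,
            if toU (n + 1) ((Fin.snocEquiv (fun _ => Bool)) (b, v)) 1 = t ∧
               toU (n + 1) ((Fin.snocEquiv (fun _ => Bool)) (b, v)) (n + 1) = s
            then pathProd f ε xi xA y (n + 1) (toU (n + 1) ((Fin.snocEquiv (fun _ => Bool)) (b, v)))
            else 0)
        = ∑ b : Bool, ∑ v : Fin n → Bool, (if b = s then 1 else 0) *
            ((if toU n v 1 = t ∧ toU n v n = true then pathProd f ε xi xA y n (toU n v) else 0) *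
                (yfacK ε y n true * transK f xi xA n true s) +
             (if toU n v 1 = t ∧ toU n v n = false then pathProd f ε xi xA y n (toU n v) else 0) *
                (yfacK ε y n false * transK f xi xA n false s)) := by
          apply Finset.sum_congr rfl
          intro b _
          apply Finset.sum_congr rfl
          intro v _
          exact key b v
      _ = ∑ v : Fin n → Bool,
            ((if toU n v 1 = t ∧ toU n v n = true then pathProd f ε xi xA y n (toU n v) else 0) *
                (yfacK ε y n true * transK f xi xA n true s) +
             (if toU n v 1 = t ∧ toU n v n = false then pathProd f ε xi xA y n (toU n v) else 0) *
                (yfacK ε y n false * transK f xi xA n false s)) := by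
          rw [Fintype.sum_bool]
          rcases hs : s <;> simp
      _ = Gfun f ε xi xA y n t true * (yfacK ε y n true * transK f xi xA n true s) +
          Gfun f ε xi xA y n t false * (yfacK ε y n false * transK f xi xA n false s) := by
          rw [Finset.sum_add_distrib, ← Finset.sum_mul, ← Finset.sum_mul,
            ih t true, ih t false]
      _ = Gfun f ε xi xA y (n + 1) t s := by
          rw [Gfun_succ f ε xi xA y n hn]
          ring

end AuxAlg2


section Aux10

variable {K : Type*} [Field K]
variable {d : ℕ} {f : ℕ → Bool}

/-- The filter condition in terms of the orientation sequence. -/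
def CondU (d : ℕ) (u : ℕ → Bool) : Prop :=
  u 1 = true ∨ (if Odd d then u d = false else u d = true)

lemma cond_iff (hd : 1 ≤ d) (u : ℕ → Bool) :
    (S f 1 ∈ Pm d f u ∨ (if Odd d then Ed f d else N f d) ∈ Pm d f u) ↔ CondU d u := by
  unfold CondU
  by_cases ho : Odd d
  · rw [if_pos ho, if_pos ho, S1_mem_Pm_iff hd u, Ed_mem_Pm_iff hd u]
  · rw [if_neg ho, if_neg ho, S1_mem_Pm_iff hd u, N_mem_Pm_iff hd u]

/-- Weight of a valid matching in terms of transition weights. -/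
lemma weight_Pm (hd : 1 ≤ d) (u : ℕ → Bool) (hu : ValidU d f u)
    (ε : ℕ → ℤ) (xi xA y : ℕ → K) (wt : Edge → K)
    (hShared : ∀ j, 1 ≤ j → j ≤ d - 1 →
      if f j then
        wt (N f j) = xA j ∧ wt (Ed f j) = xi (j + 1) ∧ wt (W f (j + 1)) = xi j
      else
        wt (Ed f j) = xA j ∧ wt (N f j) = xi (j + 1) ∧ wt (S f (j + 1)) = xi j) :
    xwt wt (Pm d f u) * ywt d f ε y (Pm d f u) =
      (wt (E0 f (u 1)) * wt (ElastO f d (!(u d))) * yfacK ε y d (u d)) *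
        pathProd f ε xi xA y d u := by
  rw [xwt_Pm hd u wt, ywt_Pm hd u hu ε y]
  have hy : ∀ j, (if
        ((Odd j ∧ ((ε j = 1 ∧ u j = false) ∨ (ε j = -1 ∧ u j = true))) ∨
         (Even j ∧ ((ε j = 1 ∧ u j = true) ∨ (ε j = -1 ∧ u j = false)))) then y j else 1) =
      yfacK ε y j (u j) := fun j => rfl
  simp only [hy]
  have hysplit : ∏ j ∈ Finset.Icc 1 d, yfacK ε y j (u j) =
      (∏ j ∈ Finset.Icc 1 (d - 1), yfacK ε y j (u j)) * yfacK ε y d (u d) := by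
    conv_lhs => rw [show d = (d - 1) + 1 by omega]
    rw [Finset.prod_Icc_succ_top (by omega), show d - 1 + 1 = d by omega]
  have hwmid : ∏ k ∈ Finset.Icc 1 (d - 1), wt (EmidO f k (!(u k)) (u (k + 1))) =
      ∏ k ∈ Finset.Icc 1 (d - 1), transK f xi xA k (u k) (u (k + 1)) := by
    apply Finset.prod_congr rfl
    intro k hk
    simp only [Finset.mem_Icc] at hk
    exact wt_EmidO wt xi xA k (u k) (u (k + 1)) (hu k hk.1 (by omega)) (hShared k hk.1 hk.2)
  rw [hysplit, hwmid, pathProd, Finset.prod_mul_distrib]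
  ring

lemma pathProd_zero (hd : 1 ≤ d) (u : ℕ → Bool) (hu : ¬ ValidU d f u)
    (ε : ℕ → ℤ) (xi xA y : ℕ → K) : pathProd f ε xi xA y d u = 0 := by
  unfold ValidU at hu
  push_neg at hu
  obtain ⟨j, h1, h2, hnall⟩ := hu
  apply Finset.prod_eq_zero (Finset.mem_Icc.mpr ⟨h1, by omega⟩)
  rw [transK_not_allowed xi xA j (u j) (u (j + 1)) hnall, zero_mul]

lemma toU_at (n : ℕ) (v : Fin n → Bool) (i : Fin n) : toU n v (i.val + 1) = v i := by
  unfold toU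
  rw [dif_pos ⟨by omega, by omega⟩]
  simp

lemma toU_agree (n : ℕ) (v : Fin n → Bool) (u : ℕ → Bool)
    (h : ∀ i : Fin n, v i = u (i.val + 1)) :
    ∀ j, 1 ≤ j → j ≤ n → toU n v j = u j := by
  intro j h1 h2
  have : toU n v ((⟨j - 1, by omega⟩ : Fin n).val + 1) = v ⟨j - 1, by omega⟩ :=
    toU_at n v ⟨j - 1, by omega⟩
  simp only [show (⟨j - 1, by omega⟩ : Fin n).val + 1 = j by simp; omega] at this
  rw [this, h ⟨j - 1, by omega⟩]
  simp only [show (⟨j - 1, by omega⟩ : Fin n).val + 1 = j by simp; omega]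

/-- The filtered matchings are the image of valid, condition-satisfying sequences. -/
lemma filter_matchings_eq (hd : 1 ≤ d) :
    (matchings d f).filter
        (fun P => S f 1 ∈ P ∨ (if Odd d then Ed f d else N f d) ∈ P) =
      ((Finset.univ : Finset (Fin d → Bool)).filter
          (fun v => ValidU d f (toU d v) ∧ CondU d (toU d v))).image
        (fun v => Pm d f (toU d v)) := by
  ext P
  simp only [Finset.mem_filter, Finset.mem_image, Finset.mem_univ, true_and]
  constructor
  · rintro ⟨hm, hc⟩
    have hmm := hm
    simp only [matchings, Finset.mem_filter, Finset.mem_powerset] at hmm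
    obtain ⟨hPe, hPpm⟩ := hmm
    obtain ⟨u, hu, rfl⟩ := matching_eq_Pm hd hPpm hPe
    set v : Fin d → Bool := fun i => u (i.val + 1) with hv
    have hagree : ∀ j, 1 ≤ j → j ≤ d → toU d v j = u j :=
      toU_agree d v u (fun i => rfl)
    have hPm : Pm d f (toU d v) = Pm d f u := Pm_congr hd hagree
    refine ⟨v, ⟨ValidU_congr (fun j hj1 hj2 => (hagree j hj1 (by omega)).symm) hu, ?_⟩, hPm⟩
    have hcu : CondU d u := (cond_iff hd u).1 hc
    unfold CondU at hcu ⊢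
    rw [hagree 1 le_rfl hd, hagree d hd le_rfl]
    exact hcu
  · rintro ⟨v, ⟨hval, hcond⟩, rfl⟩
    refine ⟨Pm_mem_matchings hd _ hval, (cond_iff hd _).2 hcond⟩

end Aux10


section Aux11

variable {K : Type*} [Field K]
variable {d : ℕ} {f : ℕ → Bool}

/-- The endpoint weight. -/
def kapK (f : ℕ → Bool) (d : ℕ) (ε : ℕ → ℤ) (y : ℕ → K) (wt : Edge → K) (t s : Bool) : K :=
  if (t = true ∨ (if Odd d then s = false else s = true)) then
    wt (E0 f t) * wt (ElastO f d (!s)) * yfacK ε y d s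
  else 0

lemma cond_split (ε : ℕ → ℤ) (xi xA y : ℕ → K) (wt : Edge → K) (u : ℕ → Bool) :
    (if CondU d u then
        (wt (E0 f (u 1)) * wt (ElastO f d (!(u d))) * yfacK ε y d (u d)) *
          pathProd f ε xi xA y d u
      else 0) =
    ∑ t : Bool, ∑ s : Bool, kapK f d ε y wt t s *
      (if u 1 = t ∧ u d = s then pathProd f ε xi xA y d u else 0) := by
  rw [Fintype.sum_bool, Fintype.sum_bool, Fintype.sum_bool]
  by_cases ho : Odd d <;> rcases h1 : u 1 <;> rcases h2 : u d <;>
    simp [kapK, CondU, ho, h1, h2]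

/-- The key endpoint identity (verified case by case). -/
lemma kap_identity (hd : 1 ≤ d) (ε : ℕ → ℤ) (xa : K) (xi xA y : ℕ → K) (wt : Edge → K)
    (hxi1 : xi 1 ≠ 0) (hxid : xi d ≠ 0)
    (hεd : ε d = 1 ∨ ε d = -1)
    (hwS : wt (S f 1) = xa) (hwW : wt (W f 1) = xi d)
    (hLast : if Odd d then wt (N f d) = xi 1 ∧ wt (Ed f d) = xa
             else wt (N f d) = xa ∧ wt (Ed f d) = xi 1) (t s : Bool) :
    kapK f d ε y wt t s * (Efac xi d * bfacK xi d s) =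
      xa * (∏ j ∈ Finset.Icc 1 d, xi j) *
        ((if ε d = 1 then !![xi 1 / xi d, xa * y d; 0, xi d * y d / xi 1]
          else !![xi 1 * y d / xi d, xa; 0, xi d / xi 1]) (idxF 1 t) (idxF d s)) *
        bfacK xi 1 t := by
  have hprod : ∏ j ∈ Finset.Icc 1 d, xi j = Efac xi d * xi d := by
    unfold Efac
    conv_lhs => rw [show d = (d - 1) + 1 by omega]
    rw [Finset.prod_Icc_succ_top (by omega), show d - 1 + 1 = d by omega]
  have hE0T : wt (E0 f true) = xa := by rw [E0, if_pos rfl]; exact hwS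
  have hE0F : wt (E0 f false) = xi d := by rw [E0, if_neg (by simp)]; exact hwW
  rw [hprod]
  rcases Nat.mod_two_eq_zero_or_one d with hm | hm
  · -- d even
    have ho : ¬ Odd d := by simp [Nat.odd_iff, hm]
    rw [if_neg ho] at hLast
    have hNd : wt (ElastO f d false) = xa := by rw [ElastO, if_neg (by simp)]; exact hLast.1
    have hEd : wt (ElastO f d true) = xi 1 := by rw [ElastO, if_pos rfl]; exact hLast.2
    have hev : Even d := by simpa [Nat.even_iff] using hm
    rcases hεd with he | he <;> rcases t <;> rcases s <;>
      · simp only [kapK, yfacK, bfacK, idxF, hm, he, ho, hev, hE0T, hE0F, hNd, hEd]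
        norm_num [Matrix.cons_val_zero, Matrix.cons_val_one, Matrix.head_cons,
          Matrix.head_fin_const]
        try simp only [hNd, hEd, hE0T, hE0F]
        try field_simp
        try ring
  · -- d odd
    have ho : Odd d := by simpa [Nat.odd_iff] using hm
    rw [if_pos ho] at hLast
    have hNd : wt (ElastO f d false) = xi 1 := by rw [ElastO, if_neg (by simp)]; exact hLast.1
    have hEd : wt (ElastO f d true) = xa := by rw [ElastO, if_pos rfl]; exact hLast.2
    have hev : ¬ Even d := by simp [Nat.even_iff, hm]
    rcases hεd with he | he <;> rcases t <;> rcases s <;>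
      · simp only [kapK, yfacK, bfacK, idxF, hm, he, ho, hev, hE0T, hE0F, hNd, hEd]
        norm_num [Matrix.cons_val_zero, Matrix.cons_val_one, Matrix.head_cons,
          Matrix.head_fin_const]
        try simp only [hNd, hEd, hE0T, hE0F]
        try field_simp
        try ring

lemma bfacK_ne_zero (xi : ℕ → K) (j : ℕ) (s : Bool) (h : xi j ≠ 0) : bfacK xi j s ≠ 0 := by
  unfold bfacK
  split <;> simp [h]

/-- Trace-term identity. -/
lemma kap_G (hd : 1 ≤ d) (ε : ℕ → ℤ) (xa : K) (xi xA y : ℕ → K) (wt : Edge → K)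
    (hxi : ∀ j, 1 ≤ j → j ≤ d → xi j ≠ 0)
    (hε : ∀ j, 1 ≤ j → j ≤ d → ε j = 1 ∨ ε j = -1)
    (hwS : wt (S f 1) = xa) (hwW : wt (W f 1) = xi d)
    (hLast : if Odd d then wt (N f d) = xi 1 ∧ wt (Ed f d) = xa
             else wt (N f d) = xa ∧ wt (Ed f d) = xi 1) (t s : Bool) :
    kapK f d ε y wt t s * Gfun f ε xi xA y d t s =
      xa * (∏ j ∈ Finset.Icc 1 d, xi j) *
        ((if ε d = 1 then !![xi 1 / xi d, xa * y d; 0, xi d * y d / xi 1]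
          else !![xi 1 * y d / xi d, xa; 0, xi d / xi 1]) (idxF 1 t) (idxF d s) *
          Mmat f ε xi xA y d (idxF d s) (idxF 1 t)) := by
  have hB1 := Mmat_entry f ε xi xA y d hxi hε d hd le_rfl t s
  have hb1 : bfacK xi 1 t ≠ 0 := bfacK_ne_zero xi 1 t (hxi 1 le_rfl hd)
  apply mul_right_cancel₀ hb1
  have hki := kap_identity hd ε xa xi xA y wt (hxi 1 le_rfl hd) (hxi d hd le_rfl)
    (hε d hd le_rfl) hwS hwW hLast t s
  calc kapK f d ε y wt t s * Gfun f ε xi xA y d t s * bfacK xi 1 t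
      = kapK f d ε y wt t s * (Gfun f ε xi xA y d t s * bfacK xi 1 t) := by ring
    _ = kapK f d ε y wt t s *
        (Mmat f ε xi xA y d (idxF d s) (idxF 1 t) * (Efac xi d * bfacK xi d s)) := by
        rw [hB1]
    _ = (kapK f d ε y wt t s * (Efac xi d * bfacK xi d s)) *
        Mmat f ε xi xA y d (idxF d s) (idxF 1 t) := by ring
    _ = (xa * (∏ j ∈ Finset.Icc 1 d, xi j) *
        ((if ε d = 1 then !![xi 1 / xi d, xa * y d; 0, xi d * y d / xi 1]
          else !![xi 1 * y d / xi d, xa; 0, xi d / xi 1]) (idxF 1 t) (idxF d s)) *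
        bfacK xi 1 t) * Mmat f ε xi xA y d (idxF d s) (idxF 1 t) := by rw [hki]
    _ = _ := by ring

end Aux11

/-- The good matching enumerator of the abstract band graph of a
two-sided closed curve (i.e. the weighted sum over perfect matchings of the snake graph
containing at least one of the two `a`-edges) equals `x_a · (x_{i_1} ⋯ x_{i_d})` times
the trace of `F · M_d`. -/
theorem two_sided_good_matching_enumerator
    (d : ℕ) (hd : 1 ≤ d) (f : ℕ → Bool) (ε : ℕ → ℤ)
    (hε : ∀ j, 1 ≤ j → j ≤ d → ε j = 1 ∨ ε j = -1)
    (xa : K) (xi xA y : ℕ → K) (wt : Edge → K)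
    (hxa : xa ≠ 0)
    (hxi : ∀ j, 1 ≤ j → j ≤ d → xi j ≠ 0)
    (hxA : ∀ j, 1 ≤ j → j ≤ d - 1 → xA j ≠ 0)
    (hwS : wt (S f 1) = xa) (hwW : wt (W f 1) = xi d)
    (hShared : ∀ j, 1 ≤ j → j ≤ d - 1 →
      if f j then
        wt (N f j) = xA j ∧ wt (Ed f j) = xi (j + 1) ∧ wt (W f (j + 1)) = xi j
      else
        wt (Ed f j) = xA j ∧ wt (N f j) = xi (j + 1) ∧ wt (S f (j + 1)) = xi j)
    (hLast : if Odd d then wt (N f d) = xi 1 ∧ wt (Ed f d) = xa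
             else wt (N f d) = xa ∧ wt (Ed f d) = xi 1) :
    ∑ P ∈ (matchings d f).filter
        (fun P => S f 1 ∈ P ∨ (if Odd d then Ed f d else N f d) ∈ P),
        xwt wt P * ywt d f ε y P =
      xa * (∏ j ∈ Finset.Icc 1 d, xi j) *
        ((if ε d = 1 then !![xi 1 / xi d, xa * y d; 0, xi d * y d / xi 1]
          else !![xi 1 * y d / xi d, xa; 0, xi d / xi 1]) * Mmat f ε xi xA y d).trace := by
  classical
  rw [filter_matchings_eq hd]
  have hinj : ∀ v ∈ (Finset.univ.filter
        (fun v : Fin d → Bool => ValidU d f (toU d v) ∧ CondU d (toU d v))),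
      ∀ w ∈ (Finset.univ.filter
        (fun v : Fin d → Bool => ValidU d f (toU d v) ∧ CondU d (toU d v))),
      Pm d f (toU d v) = Pm d f (toU d w) → v = w := by
    intro v hv w hw h
    simp only [Finset.mem_filter] at hv hw
    have hag := Pm_inj hd hv.2.1 hw.2.1 h
    funext i
    rw [← toU_at d v i, ← toU_at d w i]
    exact hag (i.val + 1) (by omega) (by omega)
  rw [Finset.sum_image hinj]
  set Wform : (ℕ → Bool) → K := fun u =>
    (wt (E0 f (u 1)) * wt (ElastO f d (!(u d))) * yfacK ε y d (u d)) *
      pathProd f ε xi xA y d u with hWform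
  have step1 : ∑ v ∈ Finset.univ.filter
        (fun v : Fin d → Bool => ValidU d f (toU d v) ∧ CondU d (toU d v)),
        xwt wt (Pm d f (toU d v)) * ywt d f ε y (Pm d f (toU d v)) =
      ∑ v ∈ Finset.univ.filter
        (fun v : Fin d → Bool => ValidU d f (toU d v) ∧ CondU d (toU d v)),
        Wform (toU d v) := by
    apply Finset.sum_congr rfl
    intro v hv
    simp only [Finset.mem_filter] at hv
    exact weight_Pm hd (toU d v) hv.2.1 ε xi xA y wt hShared
  rw [step1]
  have step2 : ∑ v ∈ Finset.univ.filter
        (fun v : Fin d → Bool => ValidU d f (toU d v) ∧ CondU d (toU d v)),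
        Wform (toU d v) =
      ∑ v ∈ Finset.univ.filter (fun v : Fin d → Bool => CondU d (toU d v)),
        Wform (toU d v) := by
    apply Finset.sum_subset
    · intro v hv
      simp only [Finset.mem_filter] at hv ⊢
      exact ⟨hv.1, hv.2.2⟩
    · intro v hv hnv
      simp only [Finset.mem_filter] at hv hnv
      have hnval : ¬ ValidU d f (toU d v) := by
        intro hval
        exact hnv ⟨hv.1, hval, hv.2⟩
      rw [hWform]
      simp only
      rw [pathProd_zero hd (toU d v) hnval ε xi xA y, mul_zero]
  rw [step2, Finset.sum_filter]
  have step4 : ∀ v : Fin d → Bool,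
      (if CondU d (toU d v) then Wform (toU d v) else 0) =
      ∑ t : Bool, ∑ s : Bool, kapK f d ε y wt t s *
        (if toU d v 1 = t ∧ toU d v d = s then pathProd f ε xi xA y d (toU d v) else 0) :=
    fun v => cond_split ε xi xA y wt (toU d v)
  rw [Finset.sum_congr rfl (fun v _ => step4 v)]
  rw [Finset.sum_comm]
  have step5 : ∀ t : Bool,
      (∑ v : Fin d → Bool, ∑ s : Bool, kapK f d ε y wt t s *
        (if toU d v 1 = t ∧ toU d v d = s then pathProd f ε xi xA y d (toU d v) else 0))
      = ∑ s : Bool, kapK f d ε y wt t s * Gfun f ε xi xA y d t s := by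
    intro t
    rw [Finset.sum_comm]
    apply Finset.sum_congr rfl
    intro s _
    rw [← Finset.mul_sum]
    congr 1
    exact sum_paths f ε xi xA y d hd t s
  rw [Finset.sum_congr rfl (fun t _ => step5 t)]
  rw [Fintype.sum_bool]
  rw [Fintype.sum_bool, Fintype.sum_bool]
  rw [kap_G hd ε xa xi xA y wt hxi hε hwS hwW hLast true true,
    kap_G hd ε xa xi xA y wt hxi hε hwS hwW hLast true false,
    kap_G hd ε xa xi xA y wt hxi hε hwS hwW hLast false true,
    kap_G hd ε xa xi xA y wt hxi hε hwS hwW hLast false false]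
  rw [Matrix.trace_fin_two, Matrix.mul_apply, Matrix.mul_apply, Fin.sum_univ_two,
    Fin.sum_univ_two]
  have hidx1T : idxF 1 true = 0 := by simp [idxF]
  have hidx1F : idxF 1 false = 1 := by simp [idxF]
  rcases Nat.mod_two_eq_zero_or_one d with hm | hm
  · have hdT : idxF d true = 1 := by simp [idxF, hm]
    have hdF : idxF d false = 0 := by simp [idxF, hm]
    rw [hidx1T, hidx1F, hdT, hdF]
    ring
  · have hdT : idxF d true = 0 := by simp [idxF, hm]
    have hdF : idxF d false = 1 := by simp [idxF, hm]
    rw [hidx1T, hidx1F, hdT, hdF]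
    ring

end SnakeGraph
end

section
/- (Matrix trace identity underlying the invariance of χ under rotation of a one-sided closed curve around the crosscap.) Let K be a field, let x₁, x₂, a, y ∈ K be nonzero, and let M be any 2×2 matrix over K. Then tr( !![0, x₁; x₁⁻¹, 0] · M · !![1, 0; a/(x₁·x₂), 1] · !![1, 0; 0, y] ) = tr( !![0, x₂; x₂⁻¹, 0] · !![1, 0; x₁/(a·x₂), 1] · !![0, a; −a⁻¹, 0] · !![1, 0; x₂/(a·x₁), 1] · !![y, 0; 0, 1] · M ), both sides being equal to tr( !![0, x₁; y/x₁, a/x₂] · M ). -/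
/-!
Statement 7: matrix trace identity underlying the invariance of `χ` under rotation of a
one-sided closed curve around the crosscap.
-/

open Matrix

theorem rotation_trace_identity {K : Type*} [Field K] (x₁ x₂ a y : K)
    (hx₁ : x₁ ≠ 0) (hx₂ : x₂ ≠ 0) (ha : a ≠ 0) (hy : y ≠ 0)
    (M : Matrix (Fin 2) (Fin 2) K) :
    (!![0, x₁; x₁⁻¹, 0] * M * !![1, 0; a / (x₁ * x₂), 1] * !![1, 0; 0, y]).trace =
        (!![0, x₂; x₂⁻¹, 0] * !![1, 0; x₁ / (a * x₂), 1] * !![0, a; -a⁻¹, 0] *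
          !![1, 0; x₂ / (a * x₁), 1] * !![y, 0; 0, 1] * M).trace ∧
      (!![0, x₁; x₁⁻¹, 0] * M * !![1, 0; a / (x₁ * x₂), 1] * !![1, 0; 0, y]).trace =
        (!![0, x₁; y / x₁, a / x₂] * M).trace := by
  have hM : M = !![M 0 0, M 0 1; M 1 0, M 1 1] := by
    ext i j; fin_cases i <;> fin_cases j <;> rfl
  rw [hM]
  constructor <;>
  · simp [Matrix.trace_fin_two, Matrix.mul_fin_two]
    field_simp
    ring_nf
    try (field_simp; ring)
end

section
/- (Positivity of the trace of the matrix product associated to the standard M-path of a one-sided closed curve; matrix core of the positivity of the Laurent expansion χ.) Let F be a linearly ordered field, let n ≥ 0, and let M₁, …, Mₙ be 2×2 matrices over F, each of which is either upper triangular or lower triangular, has all entries nonnegative, and has both diagonal entries strictly positive. Let A = !![p, q; r, 0] with p, q, r > 0. Then tr(A · Mₙ · Mₙ₋₁ ⋯ M₁) > 0. -/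
/-!
Entrywise nonnegative matrices are closed under multiplication, and a diagonal entry of a
product of two such matrices is at least the product of the corresponding diagonal entries.
Hence `Mₙ ⋯ M₁` is nonnegative with positive `(0,0)` entry, and the trace of `A * Mₙ ⋯ M₁`
is a sum of nonnegative terms, one of which is `p * (Mₙ ⋯ M₁) 0 0 > 0`.
-/

open Matrix

/-- The descending product `M n * M (n-1) * ⋯ * M 1` (the identity for `n = 0`). -/
def matProdDesc {F : Type*} [Field F] [LinearOrder F] [IsStrictOrderedRing F]
    (M : ℕ → Matrix (Fin 2) (Fin 2) F) : ℕ → Matrix (Fin 2) (Fin 2) F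
  | 0 => 1
  | n + 1 => M (n + 1) * matProdDesc M n

namespace Matrix

variable {ι R : Type*} [Fintype ι] [Semiring R] [PartialOrder R] [IsStrictOrderedRing R]
  {A B : Matrix ι ι R}

theorem mul_apply_nonneg (hA : ∀ i j, 0 ≤ A i j) (hB : ∀ i j, 0 ≤ B i j) (i j : ι) :
    0 ≤ (A * B) i j :=
  Finset.sum_nonneg fun k _ => mul_nonneg (hA i k) (hB k j)

theorem mul_apply_self_pos (hA : ∀ i j, 0 ≤ A i j) (hB : ∀ i j, 0 ≤ B i j) {k : ι}
    (hAk : 0 < A k k) (hBk : 0 < B k k) : 0 < (A * B) k k :=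
  (mul_pos hAk hBk).trans_le <|
    Finset.single_le_sum (fun l _ => mul_nonneg (hA k l) (hB l k)) (Finset.mem_univ k)

theorem trace_pos_of_nonneg_of_apply_self_pos (hA : ∀ i j, 0 ≤ A i j) {k : ι}
    (hAk : 0 < A k k) : 0 < A.trace :=
  hAk.trans_le <| Finset.single_le_sum (fun l _ => hA l l) (Finset.mem_univ k)

end Matrix

section matProdDesc

variable {F : Type*} [Field F] [LinearOrder F] [IsStrictOrderedRing F]
  {M : ℕ → Matrix (Fin 2) (Fin 2) F} {n : ℕ}

theorem matProdDesc_nonneg (hM : ∀ i, 1 ≤ i → i ≤ n → ∀ a b, 0 ≤ M i a b) :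
    ∀ a b, 0 ≤ matProdDesc M n a b := by
  induction n with
  | zero => simp [matProdDesc, one_apply, apply_ite]
  | succ n ih =>
    exact mul_apply_nonneg (hM (n + 1) (Nat.le_add_left 1 n) le_rfl)
      (ih fun i h1 h2 => hM i h1 (h2.trans n.le_succ))

theorem matProdDesc_apply_self_pos (hM : ∀ i, 1 ≤ i → i ≤ n → ∀ a b, 0 ≤ M i a b) {k : Fin 2}
    (hk : ∀ i, 1 ≤ i → i ≤ n → 0 < M i k k) : 0 < matProdDesc M n k k := by
  induction n with
  | zero => simp [matProdDesc]
  | succ n ih =>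
    have hM' : ∀ i, 1 ≤ i → i ≤ n → ∀ a b, 0 ≤ M i a b :=
      fun i h1 h2 => hM i h1 (h2.trans n.le_succ)
    exact mul_apply_self_pos (hM (n + 1) (Nat.le_add_left 1 n) le_rfl) (matProdDesc_nonneg hM')
      (hk (n + 1) (Nat.le_add_left 1 n) le_rfl) (ih hM' fun i h1 h2 => hk i h1 (h2.trans n.le_succ))

end matProdDesc

theorem trace_pos_of_triangular_factors_general {F : Type*} [Field F] [LinearOrder F] [IsStrictOrderedRing F]
    (n : ℕ) (M : ℕ → Matrix (Fin 2) (Fin 2) F)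
    (hnonneg : ∀ i, 1 ≤ i → i ≤ n → ∀ a b : Fin 2, 0 ≤ M i a b)
    (hdiag : ∀ i, 1 ≤ i → i ≤ n → 0 < M i 0 0 ∧ 0 < M i 1 1)
    (p q r : F) (hp : 0 < p) (hq : 0 < q) (hr : 0 < r) :
    0 < (!![p, q; r, 0] * matProdDesc M n).trace := by
  have hA : ∀ a b, 0 ≤ !![p, q; r, 0] a b := by
    simp [Fin.forall_fin_two, hp.le, hq.le, hr.le]
  have hP := matProdDesc_nonneg hnonneg
  have hP00 : 0 < matProdDesc M n 0 0 :=
    matProdDesc_apply_self_pos hnonneg fun i h1 h2 => (hdiag i h1 h2).1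
  exact trace_pos_of_nonneg_of_apply_self_pos (mul_apply_nonneg hA hP)
    (mul_apply_self_pos (k := 0) hA hP hp hP00)

theorem trace_pos_of_triangular_factors {F : Type*} [Field F] [LinearOrder F] [IsStrictOrderedRing F]
    (n : ℕ) (M : ℕ → Matrix (Fin 2) (Fin 2) F)
    (htri : ∀ i, 1 ≤ i → i ≤ n → M i 1 0 = 0 ∨ M i 0 1 = 0)
    (hnonneg : ∀ i, 1 ≤ i → i ≤ n → ∀ a b : Fin 2, 0 ≤ M i a b)
    (hdiag : ∀ i, 1 ≤ i → i ≤ n → 0 < M i 0 0 ∧ 0 < M i 1 1)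
    (p q r : F) (hp : 0 < p) (hq : 0 < q) (hr : 0 < r) :
    0 < (!![p, q; r, 0] * matProdDesc M n).trace :=
  trace_pos_of_triangular_factors_general n M hnonneg hdiag p q r hp hq hr
end
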